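/- arXiv:2311.17531 — 2 statements merged into one kernel-verified Lean document; each statement's English description precedes it below -/
import Mathlib

section
/- Let T : Δ → Δ be the tower map of an irreducible induced weak Gibbs Markov map f^R with R ∈ L¹(m), and let ν₀ be the unique ergodic f^R-invariant probability measure with dν₀/dm ∈ ℱ_β⁺(Δ₀). Then ν = (Σ_{j=0}^{∞} ν₀{R > j})^{−1} · Σ_{j=0}^{∞} T_*^j(ν₀|{R > j}) is the unique ergodic T-invariant probability measure with ν ≪ m, its density satisfies dν/dm ∈ ℱ_β⁺(Δ), and there exists C₀ > 0 with 0 < dν/dm ≤ C₀. -/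
open MeasureTheory Set Filter Topology

noncomputable section

namespace WGMPaper

variable {X M : Type*}

/-- Separation time of two points with respect to the map `F` and the partition
indexed by `p` (each partition element is a fiber of `p`). -/
def sepTime (F : X → X) (p : X → ℕ) (x y : X) : ℕ :=
  sInf {n | p (F^[n] x) ≠ p (F^[n] y)}

/-- The element of the partition `𝒫₀` of `Δ₀` with index `i`. -/
def pElem (Δ₀ : Set X) (p : X → ℕ) (i : ℕ) : Set X := Δ₀ ∩ p ⁻¹' {i}

/-- The element of the refined partition `𝒫₀ⁿ = ⋁_{i<n} F⁻ⁱ 𝒫₀` determined by the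
word `w` (with `n = w.length`). -/
def pElemN (Δ₀ : Set X) (F : X → X) (p : X → ℕ) (w : List ℕ) : Set X :=
  Δ₀ ∩ {x | ∀ k : Fin w.length, p (F^[(k : ℕ)] x) = w.get k}

/-- `F : Δ₀ → Δ₀` is a weak Gibbs Markov map with respect to the partition indexed by
`p`, Jacobian `J`, Gibbs constants `CF`, `β` and long-branch constant `δ₀`. -/
structure IsWGM [MeasurableSpace X] (m : Measure X) (Δ₀ : Set X) (F : X → X)
    (p : X → ℕ) (J : X → ℝ) (CF β δ₀ : ℝ) : Prop where
  meas_Δ₀ : MeasurableSet Δ₀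
  pos : 0 < m Δ₀
  fin : m Δ₀ < ⊤
  mapsTo : MapsTo F Δ₀ Δ₀
  meas_F : Measurable F
  meas_p : Measurable p
  meas_J : Measurable J
  quasi : (m.restrict Δ₀).map F ≪ m.restrict Δ₀
  injOn : ∀ i, InjOn F (pElem Δ₀ p i)
  markov : ∀ i, 0 < m (pElem Δ₀ p i) →
    ∃ S : Set ℕ, (m.restrict Δ₀) ((F '' pElem Δ₀ p i \ ⋃ j ∈ S, pElem Δ₀ p j) ∪
      ((⋃ j ∈ S, pElem Δ₀ p j) \ F '' pElem Δ₀ p i)) = 0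
  separating : ∀ x ∈ Δ₀, ∀ y ∈ Δ₀, x ≠ y → ∃ n, p (F^[n] x) ≠ p (F^[n] y)
  generating : ∀ A : Set X, MeasurableSet A → A ⊆ Δ₀ →
    ∃ B : Set X, MeasurableSet[MeasurableSpace.generateFrom
        {C : Set X | ∃ w : List ℕ, C = pElemN Δ₀ F p w}] B ∧
      m ((A \ B) ∪ (B \ A)) = 0
  J_pos : ∀ x ∈ Δ₀, 0 < J x
  nonsing : ∀ i, ∀ A : Set X, A ⊆ pElem Δ₀ p i → MeasurableSet A →
    m (F '' A) = ∫⁻ a in A, ENNReal.ofReal (J a) ∂m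
  CF_pos : 0 < CF
  β_pos : 0 < β
  β_lt_one : β < 1
  gibbs : ∀ i, ∀ x ∈ pElem Δ₀ p i, ∀ y ∈ pElem Δ₀ p i,
    Real.log (J x / J y) ≤ CF * β ^ sepTime F p (F x) (F y)
  δ₀_pos : 0 < δ₀
  longBranch : ∀ i, 0 < m (pElem Δ₀ p i) → ENNReal.ofReal δ₀ ≤ m (F '' pElem Δ₀ p i)

/-- The induced map `f^R`. -/
def inducedF (f : M → M) (R : M → ℕ) : M → M := fun x => f^[R x] x

/-- `f^R : Δ₀ → Δ₀` is an induced weak Gibbs Markov map for `f`, with return time `R`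
constant on the elements of the partition indexed by `p`. -/
structure IsInducedWGM [MeasurableSpace M] (m : Measure M) (f : M → M) (Δ₀ : Set M)
    (R : M → ℕ) (p : M → ℕ) (J : M → ℝ) (CF β δ₀ : ℝ) : Prop where
  toIsWGM : IsWGM m Δ₀ (inducedF f R) p J CF β δ₀
  meas_R : Measurable R
  R_pos : ∀ x ∈ Δ₀, 0 < R x
  R_const : ∀ x ∈ Δ₀, ∀ y ∈ Δ₀, p x = p y → R x = R y

/-- Irreducibility of a (weak Gibbs Markov) map with respect to the partition. -/
def IrreducibleWGM [MeasurableSpace X] (m : Measure X) (Δ₀ : Set X) (F : X → X)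
    (p : X → ℕ) : Prop :=
  ∀ i j : ℕ, 0 < m (pElem Δ₀ p i) → 0 < m (pElem Δ₀ p j) →
    ∃ n : ℕ, 0 < m (pElem Δ₀ p i ∩ F^[n] ⁻¹' pElem Δ₀ p j)

/-- Aperiodicity of a (weak Gibbs Markov) map with respect to the partition. -/
def AperiodicWGM [MeasurableSpace X] (m : Measure X) (Δ₀ : Set X) (F : X → X)
    (p : X → ℕ) : Prop :=
  ∀ i j : ℕ, 0 < m (pElem Δ₀ p i) → 0 < m (pElem Δ₀ p j) →
    ∃ k₀ : ℕ, ∀ n ≥ k₀, 0 < m (pElem Δ₀ p i ∩ F^[n] ⁻¹' pElem Δ₀ p j)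

/-- The induced map `F = f^R` has a coprime block. -/
def HasCoprimeBlock [MeasurableSpace M] (m : Measure M) (F : M → M) (Δ₀ : Set M)
    (R : M → ℕ) (p : M → ℕ) : Prop :=
  ∃ N : ℕ, 2 ≤ N ∧ ∃ ι : Fin N → ℕ, ∃ r : Fin N → ℕ,
    (∀ i, 0 < m (pElem Δ₀ p (ι i))) ∧
    (∀ i, ∀ x ∈ pElem Δ₀ p (ι i), R x = r i) ∧
    Finset.univ.gcd r = 1 ∧
    ∀ i, m ((⋃ j, pElem Δ₀ p (ι j)) \ F '' pElem Δ₀ p (ι i)) = 0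

/-- The induced map `f^R` is expanding. -/
def ExpandingInduced [PseudoMetricSpace M] (f : M → M) (Δ₀ : Set M) (R : M → ℕ)
    (p : M → ℕ) : Prop :=
  ∃ C : ℝ, 0 < C ∧ ∃ β : ℝ, 0 < β ∧ β < 1 ∧
    ∀ i : ℕ, ∀ x ∈ pElem Δ₀ p i, ∀ y ∈ pElem Δ₀ p i,
      dist (inducedF f R x) (inducedF f R y) ≤ C * β ^ sepTime (inducedF f R) p x y ∧
      ∀ j ≤ R x, dist (f^[j] x) (f^[j] y) ≤ C * dist (inducedF f R x) (inducedF f R y)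

/-- The tower `Δ = {(x,ℓ) : x ∈ Δ₀, 0 ≤ ℓ < R x}`. -/
def towerSet (Δ₀ : Set M) (R : M → ℕ) : Set (M × ℕ) := {q | q.1 ∈ Δ₀ ∧ q.2 < R q.1}

/-- The `ℓ`-th level of the tower. -/
def towerLevel (Δ₀ : Set M) (R : M → ℕ) (ℓ : ℕ) : Set (M × ℕ) :=
  {q | q.1 ∈ Δ₀ ∧ q.2 = ℓ ∧ ℓ < R q.1}

/-- The tower map `T`. -/
def towerMap (f : M → M) (R : M → ℕ) : M × ℕ → M × ℕ :=
  fun q => if q.2 + 1 < R q.1 then (q.1, q.2 + 1) else (inducedF f R q.1, 0)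

/-- The reference measure on the tower, obtained extending `m` level by level. -/
def towerMeasure [MeasurableSpace M] (m : Measure M) (Δ₀ : Set M) (R : M → ℕ) :
    Measure (M × ℕ) :=
  Measure.sum fun ℓ : ℕ => (m.restrict (Δ₀ ∩ {x | ℓ < R x})).map (fun x => (x, ℓ))

/-- Index (partition element of `η` and level) of a point of the tower. -/
def towerIdx (p : M → ℕ) (q : M × ℕ) : ℕ × ℕ := (p q.1, q.2)

/-- The separation time extended to the tower. -/
def towerSep (f : M → M) (R : M → ℕ) (p : M → ℕ) (q r : M × ℕ) : ℕ :=
  if q.2 = r.2 then sepTime (inducedF f R) p q.1 r.1 else 0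

/-- The space `ℱ_β(D)` of `β`-locally Hölder functions w.r.t. a separation time `s`. -/
def MemF {α : Type*} (β : ℝ) (s : α → α → ℕ) (D : Set α) (φ : α → ℝ) : Prop :=
  ∃ C : ℝ, 0 < C ∧ ∀ x ∈ D, ∀ y ∈ D, |φ x - φ y| ≤ C * β ^ s x y

/-- The space `ℱ_β⁺(D)`: positive functions of `ℱ_β(D)` with ratios Hölder-controlled on
each partition element (points with the same index `idx`). -/
def MemFPlus {α ι : Type*} (β : ℝ) (s : α → α → ℕ) (idx : α → ι) (D : Set α)
    (φ : α → ℝ) : Prop :=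
  MemF β s D φ ∧ (∀ x ∈ D, 0 < φ x) ∧
    ∃ C : ℝ, 0 < C ∧ ∀ x ∈ D, ∀ y ∈ D, idx x = idx y →
      |φ x / φ y - 1| ≤ C * β ^ s x y

/-- Mixing invariant measure. -/
def MixingMeasure [MeasurableSpace X] (S : X → X) (ν : Measure X) : Prop :=
  ∀ A B : Set X, MeasurableSet A → MeasurableSet B →
    Tendsto (fun n : ℕ => ν (A ∩ S^[n] ⁻¹' B)) atTop (𝓝 (ν A * ν B))

/-- Exact invariant measure: the tail σ-algebra is trivial. -/
def ExactMeasure [MeasurableSpace X] (S : X → X) (ν : Measure X) : Prop :=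
  ∀ A : Set X, (∀ n : ℕ, ∃ B : Set X, MeasurableSet B ∧ A = S^[n] ⁻¹' B) →
    ν A = 0 ∨ ν A = 1

/-- Total variation distance between two measures. -/
def tvDist [MeasurableSpace X] (μ ν : Measure X) : ℝ :=
  ⨆ A : {s : Set X // MeasurableSet s}, |(μ A).toReal - (ν A).toReal|

/-- The candidate invariant measure on the tower built from the invariant measure `ν₀`
of the induced map: `ν = (Σ_j ν₀{R>j})⁻¹ Σ_j T^j_*(ν₀|{R>j})`. -/
def nuTower [MeasurableSpace M] (ν₀ : Measure M) (f : M → M) (R : M → ℕ) :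
    Measure (M × ℕ) :=
  (∑' j : ℕ, ν₀ {x | j < R x})⁻¹ •
    Measure.sum fun j : ℕ =>
      Measure.map ((towerMap f R)^[j])
        (Measure.map (fun x => (x, (0 : ℕ))) (ν₀.restrict {x | j < R x}))

/-- The first return time `R̂` to the base of the tower. -/
def hatR (f : M → M) (R : M → ℕ) (q : M × ℕ) : ℕ :=
  sInf {n | ((towerMap f R)^[n] q).2 = 0}

/-- The stopping times `τ_k` on `Δ × Δ`. -/
def tau (f : M → M) (R : M → ℕ) (n₀ : ℕ) : ℕ → (M × ℕ) × (M × ℕ) → ℕ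
  | 0, _ => 0
  | k + 1, q =>
      tau f R n₀ k q + n₀ +
        hatR f R ((towerMap f R)^[n₀ + tau f R n₀ k q]
          (if (k + 1) % 2 = 1 then q.1 else q.2))

/-- The simultaneous return time `S` to `Δ₀ × Δ₀`. -/
def simS (f : M → M) (R : M → ℕ) (n₀ : ℕ) (q : (M × ℕ) × (M × ℕ)) : ℕ :=
  sInf {t | ∃ i : ℕ, 2 ≤ i ∧ t = tau f R n₀ i q ∧
    ((towerMap f R)^[t] q.1).2 = 0 ∧ ((towerMap f R)^[t] q.2).2 = 0}

/-- The element of `⋁_{i<n} T⁻ⁱ η` containing the point `q` of the tower. -/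
def etaCellN (f : M → M) (R : M → ℕ) (p : M → ℕ) (Δ₀ : Set M) (n : ℕ)
    (q : M × ℕ) : Set (M × ℕ) :=
  {r | r ∈ towerSet Δ₀ R ∧
    ∀ i < n, towerIdx p ((towerMap f R)^[i] r) = towerIdx p ((towerMap f R)^[i] q)}

/-- The element of the partition `ξ_k` of `Δ × Δ` containing the point `q`. -/
def xiCell (f : M → M) (R : M → ℕ) (p : M → ℕ) (Δ₀ : Set M) (n₀ : ℕ) :
    ℕ → (M × ℕ) × (M × ℕ) → Set ((M × ℕ) × (M × ℕ))
  | 0, q => etaCellN f R p Δ₀ 1 q.1 ×ˢ etaCellN f R p Δ₀ 1 q.2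
  | k + 1, q =>
      if (k + 1) % 2 = 1 then
        etaCellN f R p Δ₀ (tau f R n₀ (k + 1) q) q.1 ×ˢ
          (Prod.snd '' xiCell f R p Δ₀ n₀ k q)
      else
        (Prod.fst '' xiCell f R p Δ₀ n₀ k q) ×ˢ
          etaCellN f R p Δ₀ (tau f R n₀ (k + 1) q) q.2

/-- The element of the refined tower partition `η_n = ⋁_{i<n} T⁻ⁱ η` determined by a
word `w` of indices (with `n = w.length`). -/
def towerElemN (f : M → M) (R : M → ℕ) (p : M → ℕ) (Δ₀ : Set M)
    (w : List (ℕ × ℕ)) : Set (M × ℕ) :=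
  towerSet Δ₀ R ∩
    {q | ∀ k : Fin w.length, towerIdx p ((towerMap f R)^[(k : ℕ)] q) = w.get k}

/-- A probability density on the tower lying in `ℱ_β⁺(Δ)` with ratio constant `Cφ`. -/
def GoodDensity [MeasurableSpace M] (m : Measure M) (f : M → M) (Δ₀ : Set M)
    (R : M → ℕ) (p : M → ℕ) (β : ℝ) (φ : M × ℕ → ℝ) (Cφ : ℝ) : Prop :=
  IsProbabilityMeasure ((towerMeasure m Δ₀ R).withDensity fun q => ENNReal.ofReal (φ q)) ∧
  MemF β (towerSep f R p) (towerSet Δ₀ R) φ ∧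
  (∀ q ∈ towerSet Δ₀ R, 0 < φ q) ∧ 0 < Cφ ∧
  ∀ q ∈ towerSet Δ₀ R, ∀ r ∈ towerSet Δ₀ R, towerIdx p q = towerIdx p r →
    |φ q / φ r - 1| ≤ Cφ * β ^ towerSep f R p q r

/-- The product measure `P = λ₁ × λ₂` on `Δ × Δ`, where `λᵢ = φᵢ · mΔ`. -/
def prodP [MeasurableSpace M] (m : Measure M) (Δ₀ : Set M) (R : M → ℕ)
    [SFinite (towerMeasure m Δ₀ R)] (φ₁ φ₂ : M × ℕ → ℝ) :
    Measure ((M × ℕ) × (M × ℕ)) :=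
  ((towerMeasure m Δ₀ R).prod (towerMeasure m Δ₀ R)).withDensity
    (fun r => ENNReal.ofReal (φ₁ r.1 * φ₂ r.2))

end WGMPaper

namespace WGMPaper

instance {M : Type*} [MeasurableSpace M] (m : MeasureTheory.Measure M) [MeasureTheory.SFinite m]
    (Δ₀ : Set M) (R : M → ℕ) : MeasureTheory.SFinite (towerMeasure m Δ₀ R) := by
  unfold towerMeasure; infer_instance

end WGMPaper

namespace WGMPaper

open ENNReal

variable {α : Type*} [MeasurableSpace α]

lemma measurableSet_natLt {f g : α → ℕ} (hf : Measurable f) (hg : Measurable g) :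
    MeasurableSet {x | f x < g x} := by
  have h : {x | f x < g x} = ⋃ n : ℕ, f ⁻¹' {n} ∩ g ⁻¹' {k | n < k} := by
    ext x
    simp only [Set.mem_setOf_eq, Set.mem_iUnion, Set.mem_inter_iff, Set.mem_preimage,
      Set.mem_singleton_iff]
    exact ⟨fun h => ⟨f x, rfl, h⟩, fun ⟨n, hn, h⟩ => hn ▸ h⟩
  rw [h]
  exact MeasurableSet.iUnion fun n => (hf (measurableSet_singleton n)).inter (hg trivial)

/-- An invariant probability measure absolutely continuous w.r.t. an ergodic invariant
probability measure coincides with it. -/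
lemma eq_of_ergodic_absolutelyContinuous {T : α → α} {μ ν : Measure α}
    [IsProbabilityMeasure μ] [IsProbabilityMeasure ν]
    (hT : Measurable T) (hμ : Ergodic T μ) (hν : ν.map T = ν) (hac : ν ≪ μ) : ν = μ := by
  classical
  set g : α → ℝ≥0∞ := ν.rnDeriv μ with hgdef
  have hg : Measurable g := ν.measurable_rnDeriv μ
  have hwd : μ.withDensity g = ν := Measure.withDensity_rnDeriv_eq ν μ hac
  have hA : ∀ s : Set α, MeasurableSet s → ν s = ∫⁻ x in s, g x ∂μ := by
    intro s hs; rw [← hwd, withDensity_apply _ hs]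
  -- dichotomy for sublevel sets of g
  have key : ∀ c : ℝ≥0∞, c ≠ ∞ → μ {x | g x < c} = 0 ∨ μ {x | g x < c}ᶜ = 0 := by
    intro c hc
    rcases eq_or_ne c 0 with rfl | hc0
    · left; simp
    set A : Set α := {x | g x < c} with hAdef
    have hAm : MeasurableSet A := measurableSet_lt hg measurable_const
    set B : Set α := T ⁻¹' A with hBdef
    have hBm : MeasurableSet B := hAm.preimage hT
    have hμAB : μ A = μ B :=
      (hμ.toMeasurePreserving.measure_preimage hAm.nullMeasurableSet).symm
    have hνAB : ν A = ν B := by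
      rw [hBdef, ← Measure.map_apply hT hAm, hν]
    -- μ (A \ B) = μ (B \ A)
    have hfin : ∀ s : Set α, μ s ≠ ∞ := fun s => measure_ne_top μ s
    have hνfin : ∀ s : Set α, ν s ≠ ∞ := fun s => measure_ne_top ν s
    have hdAB : μ (A \ B) = μ (B \ A) := by
      have h1 : μ (A \ B) + μ (A ∩ B) = μ A := measure_diff_add_inter A hBm
      have h2 : μ (B \ A) + μ (B ∩ A) = μ B := measure_diff_add_inter B hAm
      rw [Set.inter_comm B A] at h2
      have := h1.trans (hμAB.trans h2.symm)
      exact WithTop.add_right_cancel (hfin _) this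
    have hIAB : ∫⁻ x in A \ B, g x ∂μ = ∫⁻ x in B \ A, g x ∂μ := by
      have h1 : ν (A \ B) + ν (A ∩ B) = ν A := measure_diff_add_inter A hBm
      have h2 : ν (B \ A) + ν (B ∩ A) = ν B := measure_diff_add_inter B hAm
      rw [Set.inter_comm B A] at h2
      have h3 : ν (A \ B) = ν (B \ A) :=
        WithTop.add_right_cancel (hνfin _) (h1.trans (hνAB.trans h2.symm))
      rw [← hA _ (hAm.diff hBm), ← hA _ (hBm.diff hAm)]; exact h3
    -- upper and lower bounds
    have hup : ∫⁻ x in A \ B, g x ∂μ ≤ c * μ (A \ B) := by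
      have hae : ∀ᵐ x ∂μ.restrict (A \ B), g x ≤ c := by
        filter_upwards [ae_restrict_mem (hAm.diff hBm)] with x hx
        exact (hx.1 : g x < c).le
      calc ∫⁻ x in A \ B, g x ∂μ ≤ ∫⁻ _ in A \ B, c ∂μ := lintegral_mono_ae hae
        _ = c * μ (A \ B) := setLIntegral_const _ _
    have hlo : c * μ (B \ A) ≤ ∫⁻ x in B \ A, g x ∂μ := by
      have hae : ∀ᵐ x ∂μ.restrict (B \ A), c ≤ g x := by
        filter_upwards [ae_restrict_mem (hBm.diff hAm)] with x hx
        exact not_lt.1 hx.2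
      calc c * μ (B \ A) = ∫⁻ _ in B \ A, c ∂μ := (setLIntegral_const _ _).symm
        _ ≤ ∫⁻ x in B \ A, g x ∂μ := lintegral_mono_ae hae
    have hIeq : ∫⁻ x in A \ B, g x ∂μ = c * μ (A \ B) := by
      refine le_antisymm hup ?_
      rw [hdAB]; exact hlo.trans hIAB.symm.le
    -- strictness forces μ (A \ B) = 0
    have hABz : μ (A \ B) = 0 := by
      by_contra ha
      -- find a rational level with positive measure
      set S : ℚ → Set α := fun q =>
        if ((Real.toNNReal (q : ℝ) : ℝ≥0∞) < c) then
          (A \ B) ∩ {x | g x ≤ (Real.toNNReal (q : ℝ) : ℝ≥0∞)} else ∅ with hSdef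
      have hcover : A \ B ⊆ ⋃ q : ℚ, S q := by
        intro x hx
        obtain ⟨q, _, hq1, hq2⟩ := ENNReal.lt_iff_exists_rat_btwn.1 (hx.1 : g x < c)
        refine Set.mem_iUnion.2 ⟨q, ?_⟩
        rw [hSdef]
        simp only [if_pos hq2]
        exact ⟨hx, hq1.le⟩
      have hq : ∃ q : ℚ, μ (S q) ≠ 0 := by
        by_contra h
        push_neg at h
        exact ha (le_antisymm ((measure_mono hcover).trans
          (le_of_eq (measure_iUnion_null h))) (zero_le))
      obtain ⟨q, hq⟩ := hq
      have hqc : (Real.toNNReal (q : ℝ) : ℝ≥0∞) < c := by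
        by_contra h
        apply hq; rw [hSdef]; simp only [if_neg h]; exact measure_empty
      set qc : ℝ≥0∞ := (Real.toNNReal (q : ℝ) : ℝ≥0∞) with hqcdef
      have hSq : S q = (A \ B) ∩ {x | g x ≤ qc} := by rw [hSdef]; exact if_pos hqc
      have hSm : MeasurableSet (S q) := by
        rw [hSq]; exact (hAm.diff hBm).inter (measurableSet_le hg measurable_const)
      have hSsub : S q ⊆ A \ B := by rw [hSq]; exact Set.inter_subset_left
      set d := μ (S q) with hddef
      have hd0 : d ≠ 0 := hq
      have hdfin : d ≠ ∞ := hfin _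
      have hsplit : ∫⁻ x in A \ B, g x ∂μ =
          ∫⁻ x in S q, g x ∂μ + ∫⁻ x in (A \ B) \ S q, g x ∂μ := by
        rw [← lintegral_union ((hAm.diff hBm).diff hSm) disjoint_sdiff_right,
          Set.union_diff_cancel hSsub]
      have hb1 : ∫⁻ x in S q, g x ∂μ ≤ qc * d := by
        have hae : ∀ᵐ x ∂μ.restrict (S q), g x ≤ qc := by
          filter_upwards [ae_restrict_mem hSm] with x hx
          rw [hSq] at hx; exact hx.2
        calc ∫⁻ x in S q, g x ∂μ ≤ ∫⁻ _ in S q, qc ∂μ := lintegral_mono_ae hae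
          _ = qc * d := setLIntegral_const _ _
      have hb2 : ∫⁻ x in (A \ B) \ S q, g x ∂μ ≤ c * (μ (A \ B) - d) := by
        have hmd : μ ((A \ B) \ S q) = μ (A \ B) - d := by
          rw [hddef, measure_diff hSsub hSm.nullMeasurableSet hdfin]
        have hae : ∀ᵐ x ∂μ.restrict ((A \ B) \ S q), g x ≤ c := by
          filter_upwards [ae_restrict_mem ((hAm.diff hBm).diff hSm)] with x hx
          exact (hx.1.1 : g x < c).le
        calc ∫⁻ x in (A \ B) \ S q, g x ∂μ ≤ ∫⁻ _ in (A \ B) \ S q, c ∂μ :=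
              lintegral_mono_ae hae
          _ = c * μ ((A \ B) \ S q) := setLIntegral_const _ _
          _ = c * (μ (A \ B) - d) := by rw [hmd]
      have hstrict : ∫⁻ x in A \ B, g x ∂μ < c * μ (A \ B) := by
        calc ∫⁻ x in A \ B, g x ∂μ
            ≤ qc * d + c * (μ (A \ B) - d) := by rw [hsplit]; exact add_le_add hb1 hb2
          _ < c * d + c * (μ (A \ B) - d) := by
              refine ENNReal.add_lt_add_right (ENNReal.mul_ne_top hc (ENNReal.sub_ne_top (hfin _))) ?_
              rw [mul_comm qc d, mul_comm c d]; exact ENNReal.mul_lt_mul_right hd0 hdfin hqc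
          _ = c * (d + (μ (A \ B) - d)) := (mul_add c d _).symm
          _ = c * μ (A \ B) := by
              rw [add_tsub_cancel_of_le (measure_mono hSsub)]
      exact absurd hIeq hstrict.ne
    have hBAz : μ (B \ A) = 0 := hdAB ▸ hABz
    have haeeq : T ⁻¹' A =ᵐ[μ] A := by
      rw [MeasureTheory.ae_eq_set]
      exact ⟨hBAz, hABz⟩
    rcases hμ.quasiErgodic.ae_empty_or_univ₀ hAm.nullMeasurableSet haeeq with h | h
    · exact Or.inl (ae_eq_empty.1 h)
    · exact Or.inr (ae_eq_univ.1 h)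
  -- g is a.e. constant
  set c₀ : ℝ≥0∞ := ⨆ (q : ℚ) (_ : μ {x | g x < (Real.toNNReal (q : ℝ) : ℝ≥0∞)} = 0),
    (Real.toNNReal (q : ℝ) : ℝ≥0∞) with hc₀def
  have hlow : μ {x | g x < c₀} = 0 := by
    have hsub : {x | g x < c₀} ⊆ ⋃ (q : ℚ),
        if μ {x | g x < (Real.toNNReal (q : ℝ) : ℝ≥0∞)} = 0 then
          {x | g x < (Real.toNNReal (q : ℝ) : ℝ≥0∞)} else ∅ := by
      intro x hx
      have hx' : g x < c₀ := hx
      rw [hc₀def, lt_iSup_iff] at hx'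
      obtain ⟨q, hq⟩ := hx'
      rw [lt_iSup_iff] at hq
      obtain ⟨hq0, hqlt⟩ := hq
      exact Set.mem_iUnion.2 ⟨q, by simp only [if_pos hq0]; exact hqlt⟩
    refine le_antisymm ((measure_mono hsub).trans (le_of_eq (measure_iUnion_null ?_)))
      (zero_le)
    intro q
    by_cases h : μ {x | g x < (Real.toNNReal (q : ℝ) : ℝ≥0∞)} = 0
    · simpa [if_pos h] using h
    · simp [if_neg h]
  have hhigh : μ {x | c₀ < g x} = 0 := by
    have hsub : {x | c₀ < g x} ⊆ ⋃ (q : ℚ),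
        if μ {x | g x < (Real.toNNReal (q : ℝ) : ℝ≥0∞)} = 0 then (∅ : Set α) else
          {x | g x < (Real.toNNReal (q : ℝ) : ℝ≥0∞)}ᶜ := by
      intro x hx
      obtain ⟨q, _, hq1, hq2⟩ := ENNReal.lt_iff_exists_rat_btwn.1 (hx : c₀ < g x)
      have hnz : μ {x | g x < (Real.toNNReal (q : ℝ) : ℝ≥0∞)} ≠ 0 := by
        intro h0
        have hle : (Real.toNNReal (q : ℝ) : ℝ≥0∞) ≤ c₀ := by
          rw [hc₀def]
          exact le_iSup₂ (f := fun (q : ℚ)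
            (_ : μ {x | g x < (Real.toNNReal (q : ℝ) : ℝ≥0∞)} = 0) =>
            (Real.toNNReal (q : ℝ) : ℝ≥0∞)) q h0
        exact absurd (hle.trans_lt hq1).false (by simp)
      refine Set.mem_iUnion.2 ⟨q, ?_⟩
      simp only [if_neg hnz, Set.mem_compl_iff, Set.mem_setOf_eq, not_lt]
      exact hq2.le
    refine le_antisymm ((measure_mono hsub).trans (le_of_eq (measure_iUnion_null ?_)))
      (zero_le)
    intro q
    by_cases h : μ {x | g x < (Real.toNNReal (q : ℝ) : ℝ≥0∞)} = 0
    · simp [if_pos h]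
    · rcases key (Real.toNNReal (q : ℝ) : ℝ≥0∞) coe_ne_top with h' | h'
      · exact absurd h' h
      · simpa [if_neg h] using h'
  have hgconst : g =ᵐ[μ] fun _ => c₀ := by
    have : {x | ¬ g x = c₀} ⊆ {x | g x < c₀} ∪ {x | c₀ < g x} := by
      intro x hx
      rcases lt_or_gt_of_ne (hx : g x ≠ c₀) with h | h
      · exact Or.inl h
      · exact Or.inr h
    exact le_antisymm ((measure_mono this).trans
      (le_of_eq (by rw [measure_union_null_iff.2 ⟨hlow, hhigh⟩]))) (zero_le)
  have hνc : ν = c₀ • μ := by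
    rw [← hwd, withDensity_congr_ae hgconst, withDensity_const]
  have hc₀1 : c₀ = 1 := by
    have h1 : ν Set.univ = 1 := measure_univ
    have h2 : (c₀ • μ) Set.univ = c₀ := by
      rw [Measure.smul_apply, smul_eq_mul, measure_univ, mul_one]
    rw [hνc, h2] at h1; exact h1
  rw [hνc, hc₀1, one_smul]

end WGMPaper

namespace WGMPaper

open ENNReal


section TowerLemmas

variable {M : Type*} [MeasurableSpace M] (f : M → M) (R : M → ℕ)

lemma measurable_towerMap (hF : Measurable (inducedF f R)) (hR : Measurable R) :
    Measurable (towerMap f R) := by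
  unfold towerMap
  refine Measurable.ite ?_ ?_ ?_
  · exact measurableSet_natLt (((measurable_of_countable fun n : ℕ => n + 1)).comp
      measurable_snd) (hR.comp measurable_fst)
  · exact measurable_fst.prodMk
      (((measurable_of_countable fun n : ℕ => n + 1)).comp measurable_snd)
  · exact (hF.comp measurable_fst).prodMk measurable_const

lemma towerMap_iterate_lt (x : M) : ∀ {j : ℕ}, j < R x →
    (towerMap f R)^[j] (x, 0) = (x, j) := by
  intro j
  induction j with
  | zero => intro _; rfl
  | succ n ih =>
      intro hj
      rw [Function.iterate_succ_apply', ih (Nat.lt_of_succ_lt hj)]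
      unfold towerMap
      simp only [if_pos hj]

lemma towerMap_iterate_eq (x : M) {j : ℕ} (hj : R x = j + 1) :
    (towerMap f R)^[j + 1] (x, 0) = (inducedF f R x, 0) := by
  rw [Function.iterate_succ_apply', towerMap_iterate_lt f R x (by omega)]
  unfold towerMap
  simp [hj]

end TowerLemmas

section Approx

variable {X : Type*} [MeasurableSpace X]

/-- A locally Hölder function on a separable `Δ₀` extends to a measurable function. -/
lemma measurable_indicator_of_holder {Δ₀ : Set X} {F : X → X} {p : X → ℕ} {ρ₀ : X → ℝ}
    {C β : ℝ} (hΔm : MeasurableSet Δ₀) (hF : Measurable F) (hp : Measurable p)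
    (hC : 0 ≤ C) (hβ0 : 0 < β) (hβ1 : β < 1)
    (hsep : ∀ x ∈ Δ₀, ∀ y ∈ Δ₀, x ≠ y → ∃ n, p (F^[n] x) ≠ p (F^[n] y))
    (hH : ∀ x ∈ Δ₀, ∀ y ∈ Δ₀, |ρ₀ x - ρ₀ y| ≤ C * β ^ sepTime F p x y) :
    Measurable (Set.indicator Δ₀ ρ₀) := by
  classical
  -- Hölder estimate on cylinders
  have hsepge : ∀ (n : ℕ), ∀ x ∈ Δ₀, ∀ y ∈ Δ₀,
      (∀ k, k < n → p (F^[k] y) = p (F^[k] x)) → |ρ₀ x - ρ₀ y| ≤ C * β ^ n := by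
    intro n x hx y hy hmatch
    rcases eq_or_ne x y with rfl | hxy
    · have : |ρ₀ x - ρ₀ x| = 0 := by simp
      rw [this]; positivity
    · have hne : {k | p (F^[k] x) ≠ p (F^[k] y)}.Nonempty := hsep x hx y hy hxy
      have hsn : n ≤ sepTime F p x y := by
        by_contra h
        push_neg at h
        exact (Nat.sInf_mem hne) ((hmatch _ h).symm)
      exact (hH x hx y hy).trans
        (mul_le_mul_of_nonneg_left (pow_le_pow_of_le_one hβ0.le hβ1.le hsn) hC)
  -- cylinder approximations
  let e : (n : ℕ) → (Fin n → ℕ) → ℝ := fun n w =>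
    if h : ∃ y, y ∈ Δ₀ ∧ ∀ k : Fin n, p (F^[(k : ℕ)] y) = w k then ρ₀ h.choose else 0
  let g : ℕ → X → ℝ := fun n x => e n fun k => p (F^[(k : ℕ)] x)
  have hg : ∀ n, Measurable (g n) := fun n =>
    (measurable_of_countable (e n)).comp
      (measurable_pi_lambda _ fun k => hp.comp (hF.iterate (k : ℕ)))
  have hgconv : ∀ x, Tendsto (fun n => Set.indicator Δ₀ (g n) x) atTop
      (𝓝 (Set.indicator Δ₀ ρ₀ x)) := by
    intro x
    by_cases hx : x ∈ Δ₀
    · have hbound : ∀ n, ‖Set.indicator Δ₀ (g n) x - Set.indicator Δ₀ ρ₀ x‖ ≤ C * β ^ n := by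
        intro n
        rw [Set.indicator_of_mem hx, Set.indicator_of_mem hx, Real.norm_eq_abs]
        have hex : ∃ y, y ∈ Δ₀ ∧ ∀ k : Fin n,
            p (F^[(k : ℕ)] y) = p (F^[(k : ℕ)] x) := ⟨x, hx, fun _ => rfl⟩
        have hgx : g n x = ρ₀ hex.choose := dif_pos hex
        obtain ⟨hyΔ, hyw⟩ := hex.choose_spec
        rw [hgx, abs_sub_comm]
        exact hsepge n x hx _ hyΔ fun k hk => hyw ⟨k, hk⟩
      have htend : Tendsto (fun n : ℕ => C * β ^ n) atTop (𝓝 0) := by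
        simpa using (tendsto_pow_atTop_nhds_zero_of_lt_one hβ0.le hβ1).const_mul C
      rw [← tendsto_sub_nhds_zero_iff]
      exact squeeze_zero_norm hbound htend
    · have hz : ∀ n, Set.indicator Δ₀ (g n) x = Set.indicator Δ₀ ρ₀ x := fun n => by
        rw [Set.indicator_of_notMem hx, Set.indicator_of_notMem hx]
      exact tendsto_const_nhds.congr fun n => (hz n).symm
  exact measurable_of_tendsto_metrizable (fun n => (hg n).indicator hΔm)
    (tendsto_pi_nhds.2 hgconv)

end Approx

/-- **Theorem (invariant measure for the tower map).** If `T` is the tower map of an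
irreducible induced weak Gibbs Markov map `f^R` with `R ∈ L¹(m)` and `ν₀` is the unique
ergodic `f^R`-invariant probability measure with density in `ℱ_β⁺(Δ₀)`, then
`ν = (Σ_j ν₀{R>j})⁻¹ Σ_j T^j_*(ν₀|{R>j})` is the unique ergodic `T`-invariant
probability measure absolutely continuous w.r.t. `m` on the tower, with density in
`ℱ_β⁺(Δ)` bounded above by some `C₀ > 0`. -/
theorem tower_invariant_measure
    {M : Type*} [MeasurableSpace M]
    (m : Measure M) (f : M → M) (Δ₀ : Set M) (R : M → ℕ) (p : M → ℕ) (J : M → ℝ)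
    (CF β δ₀ : ℝ) (hWGM : IsInducedWGM m f Δ₀ R p J CF β δ₀)
    (hirr : IrreducibleWGM m Δ₀ (inducedF f R) p)
    (hR : Integrable (fun x => (R x : ℝ)) (m.restrict Δ₀))
    (ν₀ : Measure M) (hν₀_prob : IsProbabilityMeasure ν₀)
    (hν₀_inv : ν₀.map (inducedF f R) = ν₀) (hν₀_erg : Ergodic (inducedF f R) ν₀)
    (ρ₀ : M → ℝ)
    (hρ₀ : ν₀ = (m.restrict Δ₀).withDensity (fun x => ENNReal.ofReal (ρ₀ x)))
    (hρ₀F : MemFPlus β (sepTime (inducedF f R) p) p Δ₀ ρ₀) :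
    IsProbabilityMeasure (nuTower ν₀ f R) ∧
    (nuTower ν₀ f R).map (towerMap f R) = nuTower ν₀ f R ∧
    Ergodic (towerMap f R) (nuTower ν₀ f R) ∧
    nuTower ν₀ f R ≪ towerMeasure m Δ₀ R ∧
    (∀ ν' : Measure (M × ℕ), IsProbabilityMeasure ν' →
      ν'.map (towerMap f R) = ν' → Ergodic (towerMap f R) ν' →
      ν' ≪ towerMeasure m Δ₀ R → ν' = nuTower ν₀ f R) ∧
    ∃ ρ : M × ℕ → ℝ,
      nuTower ν₀ f R =
        (towerMeasure m Δ₀ R).withDensity (fun q => ENNReal.ofReal (ρ q)) ∧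
      MemFPlus β (towerSep f R p) (towerIdx p) (towerSet Δ₀ R) ρ ∧
      ∃ C₀ : ℝ, 0 < C₀ ∧ ∀ q ∈ towerSet Δ₀ R, 0 < ρ q ∧ ρ q ≤ C₀ := by
  classical
  have hΔm : MeasurableSet Δ₀ := hWGM.toIsWGM.meas_Δ₀
  have hFmeas : Measurable (inducedF f R) := hWGM.toIsWGM.meas_F
  have hpm : Measurable p := hWGM.toIsWGM.meas_p
  have hmR : Measurable R := hWGM.meas_R
  have hRpos : ∀ x ∈ Δ₀, 0 < R x := hWGM.R_pos
  have hβ0 : 0 < β := hWGM.toIsWGM.β_pos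
  have hβ1 : β < 1 := hWGM.toIsWGM.β_lt_one
  have hsepa := hWGM.toIsWGM.separating
  have hT : Measurable (towerMap f R) := measurable_towerMap f R hFmeas hmR
  have hTj : ∀ j : ℕ, Measurable ((towerMap f R)^[j]) := fun j => hT.iterate j
  have hι : ∀ j : ℕ, Measurable (fun x : M => (x, j)) := fun j =>
    measurable_id.prodMk measurable_const
  have hRj : ∀ j : ℕ, MeasurableSet {x | j < R x} := fun j =>
    hmR (show MeasurableSet {k : ℕ | j < k} from trivial)
  have hREj : ∀ j : ℕ, MeasurableSet {x | R x = j} := fun j =>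
    hmR (show MeasurableSet {k : ℕ | k = j} from trivial)
  set c : ℝ≥0∞ := ∑' j : ℕ, ν₀ {x | j < R x} with hcdef
  -- ν₀ is carried by Δ₀
  have hν₀Δc : ν₀ Δ₀ᶜ = 0 := by
    rw [hρ₀]
    refine (withDensity_absolutelyContinuous _ _) ?_
    rw [Measure.restrict_apply hΔm.compl, Set.compl_inter_self, measure_empty]
  have hν₀Δ : ν₀ Δ₀ = 1 := by
    have h := measure_add_measure_compl (μ := ν₀) hΔm
    rw [hν₀Δc, add_zero, measure_univ] at h
    exact h
  -- measure-equality of sets agreeing on Δ₀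
  have hcon : ∀ A B : Set M, (∀ x ∈ Δ₀, (x ∈ A ↔ x ∈ B)) → ν₀ A = ν₀ B := by
    intro A B h
    have h1 : ν₀ (A \ B) = 0 := measure_mono_null
      (fun x hx => by
        by_contra hxΔ
        exact hx.2 ((h x (not_not.1 hxΔ)).1 hx.1)) hν₀Δc
    have h2 : ν₀ (B \ A) = 0 := measure_mono_null
      (fun x hx => by
        by_contra hxΔ
        exact hx.2 ((h x (not_not.1 hxΔ)).2 hx.1)) hν₀Δc
    exact measure_congr (MeasureTheory.ae_eq_set.2 ⟨h1, h2⟩)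
  -- the normalization constant
  have hc1 : (1 : ℝ≥0∞) ≤ c := by
    have h0 : (1 : ℝ≥0∞) ≤ ν₀ {x | 0 < R x} := by
      rw [← hν₀Δ]
      exact measure_mono fun x hx => hRpos x hx
    exact h0.trans (ENNReal.le_tsum 0)
  have hc0 : c ≠ 0 := fun h => by simp [h] at hc1
  -- Hölder data for ρ₀
  obtain ⟨⟨CH, hCH0, hCH⟩, hρpos, ⟨CR, hCR0, hCRr⟩⟩ := hρ₀F
  have hΔne : Δ₀.Nonempty := nonempty_of_measure_ne_zero (hWGM.toIsWGM.pos).ne'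
  obtain ⟨x₀, hx₀⟩ := hΔne
  set B : ℝ := ρ₀ x₀ + CH with hBdef
  have hBpos : 0 < B := add_pos (hρpos x₀ hx₀) hCH0
  have hρB : ∀ x ∈ Δ₀, ρ₀ x ≤ B := by
    intro x hx
    have h1 := hCH x hx x₀ hx₀
    have h2 : β ^ sepTime (inducedF f R) p x x₀ ≤ 1 := pow_le_one₀ hβ0.le hβ1.le
    have h3 : ρ₀ x - ρ₀ x₀ ≤ CH * β ^ sepTime (inducedF f R) p x x₀ :=
      (le_abs_self _).trans h1
    nlinarith
  -- measurable version of the density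
  set ρ' : M → ℝ := Set.indicator Δ₀ ρ₀ with hρ'def
  have hρ'm : Measurable ρ' :=
    measurable_indicator_of_holder hΔm hFmeas hpm hCH0.le hβ0 hβ1 hsepa hCH
  have hρ'Δ : ∀ x ∈ Δ₀, ρ' x = ρ₀ x := fun x hx => Set.indicator_of_mem hx _
  have hGm : Measurable fun x => ENNReal.ofReal (ρ' x) :=
    ENNReal.measurable_ofReal.comp hρ'm
  have hν₀' : ν₀ = (m.restrict Δ₀).withDensity fun x => ENNReal.ofReal (ρ' x) := by
    rw [hρ₀]
    refine withDensity_congr_ae ?_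
    filter_upwards [ae_restrict_mem hΔm] with x hx
    rw [hρ'Δ x hx]
  -- c is finite
  have hlayer : ∀ μ' : Measure M, ∑' j : ℕ, μ' {x | j < R x} = ∫⁻ x, (R x : ℝ≥0∞) ∂μ' := by
    intro μ'
    calc ∑' j : ℕ, μ' {x | j < R x}
        = ∑' j : ℕ, ∫⁻ x, Set.indicator {x | j < R x} (fun _ => (1 : ℝ≥0∞)) x ∂μ' :=
          tsum_congr fun j => (lintegral_indicator_one (hRj j)).symm
      _ = ∫⁻ x, ∑' j : ℕ, Set.indicator {x | j < R x} (fun _ => (1 : ℝ≥0∞)) x ∂μ' :=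
          (lintegral_tsum fun j => (measurable_one.indicator (hRj j)).aemeasurable).symm
      _ = ∫⁻ x, (R x : ℝ≥0∞) ∂μ' := by
          refine lintegral_congr fun x => ?_
          have h1 : ∀ j : ℕ, Set.indicator {x | j < R x} (fun _ => (1 : ℝ≥0∞)) x =
              if j < R x then 1 else 0 := by
            intro j
            by_cases h : j < R x <;> simp [Set.indicator, h]
          rw [tsum_congr h1]
          rw [tsum_eq_sum (s := Finset.range (R x))
            (fun j hj => if_neg (fun hc => hj (Finset.mem_range.2 hc)))]
          rw [Finset.sum_congr rfl fun j hj => if_pos (Finset.mem_range.1 hj)]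
          simp
  have hint : ∫⁻ x, (R x : ℝ≥0∞) ∂(m.restrict Δ₀) < ∞ := by
    have h := hR.2
    rw [hasFiniteIntegral_iff_ofReal (Eventually.of_forall fun x => Nat.cast_nonneg _)] at h
    simpa [ENNReal.ofReal_natCast] using h
  have hcfin : c ≠ ∞ := by
    have hbound : ∀ j : ℕ, ν₀ {x | j < R x} ≤
        ENNReal.ofReal B * (m.restrict Δ₀) {x | j < R x} := by
      intro j
      rw [hν₀', withDensity_apply _ (hRj j)]
      calc ∫⁻ x in {x | j < R x}, ENNReal.ofReal (ρ' x) ∂(m.restrict Δ₀)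
          ≤ ∫⁻ _ in {x | j < R x}, ENNReal.ofReal B ∂(m.restrict Δ₀) := by
            refine lintegral_mono_ae ?_
            have hmem : ∀ᵐ x ∂(m.restrict Δ₀).restrict {x | j < R x}, x ∈ Δ₀ :=
              (ae_restrict_mem hΔm).filter_mono (ae_mono Measure.restrict_le_self)
            filter_upwards [hmem] with x hx
            exact ENNReal.ofReal_le_ofReal (by rw [hρ'Δ x hx]; exact hρB x hx)
        _ = ENNReal.ofReal B * (m.restrict Δ₀) {x | j < R x} := setLIntegral_const _ _
    have hle : c ≤ ENNReal.ofReal B * ∫⁻ x, (R x : ℝ≥0∞) ∂(m.restrict Δ₀) := by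
      rw [hcdef, ← hlayer]
      calc ∑' j : ℕ, ν₀ {x | j < R x}
          ≤ ∑' j : ℕ, ENNReal.ofReal B * (m.restrict Δ₀) {x | j < R x} :=
            ENNReal.tsum_le_tsum hbound
        _ = ENNReal.ofReal B * ∑' j : ℕ, (m.restrict Δ₀) {x | j < R x} :=
            ENNReal.tsum_mul_left
    exact (hle.trans_lt (ENNReal.mul_lt_top ENNReal.ofReal_lt_top hint)).ne
  set cR : ℝ := c.toReal with hcRdef
  have hcR : 0 < cR := ENNReal.toReal_pos hc0 hcfin
  have hcof : ENNReal.ofReal cR = c := ENNReal.ofReal_toReal hcfin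
  -- the apply formula for nuTower
  have hν_apply : ∀ s : Set (M × ℕ), MeasurableSet s →
      nuTower ν₀ f R s = c⁻¹ * ∑' j : ℕ, ν₀ ({x | (x, j) ∈ s} ∩ {x | j < R x}) := by
    intro s hs
    rw [nuTower, Measure.smul_apply, Measure.sum_apply _ hs, smul_eq_mul, ← hcdef]
    congr 1
    refine tsum_congr fun j => ?_
    rw [Measure.map_map (hTj j) (hι 0), Measure.map_apply ((hTj j).comp (hι 0)) hs,
      Measure.restrict_apply (((hTj j).comp (hι 0)) hs)]
    congr 1
    ext x
    simp only [Set.mem_inter_iff, Set.mem_preimage, Function.comp_apply, Set.mem_setOf_eq]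
    constructor
    · rintro ⟨h1, h2⟩
      exact ⟨by rwa [towerMap_iterate_lt f R x h2] at h1, h2⟩
    · rintro ⟨h1, h2⟩
      exact ⟨by rwa [towerMap_iterate_lt f R x h2], h2⟩
  -- the apply formula for the reference tower measure
  have htower_apply : ∀ s : Set (M × ℕ), MeasurableSet s →
      towerMeasure m Δ₀ R s =
        ∑' j : ℕ, m (((fun x => (x, j)) ⁻¹' s) ∩ (Δ₀ ∩ {x | j < R x})) := by
    intro s hs
    rw [towerMeasure, Measure.sum_apply _ hs]
    refine tsum_congr fun j => ?_
    rw [Measure.map_apply (hι j) hs, Measure.restrict_apply ((hι j) hs)]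
  -- probability
  have hprob : IsProbabilityMeasure (nuTower ν₀ f R) := by
    constructor
    rw [hν_apply Set.univ MeasurableSet.univ]
    simp only [Set.mem_univ, Set.setOf_true, Set.univ_inter]
    rw [← hcdef]
    exact ENNReal.inv_mul_cancel hc0 hcfin
  -- invariance
  have hinv : (nuTower ν₀ f R).map (towerMap f R) = nuTower ν₀ f R := by
    refine Measure.ext fun s hs => ?_
    rw [Measure.map_apply hT hs, hν_apply _ (hs.preimage hT), hν_apply s hs]
    congr 1
    have hS₀m : MeasurableSet {x | (x, 0) ∈ s} := (hι 0) hs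
    have hterm : ∀ j : ℕ, ν₀ ({x | (x, j) ∈ towerMap f R ⁻¹' s} ∩ {x | j < R x}) =
        ν₀ ({x | (x, j + 1) ∈ s} ∩ {x | j + 1 < R x}) +
        ν₀ (inducedF f R ⁻¹' {y | (y, 0) ∈ s} ∩ {x | R x = j + 1}) := by
      intro j
      rw [← measure_union ?_ ((hFmeas hS₀m).inter (hREj (j + 1)))]
      · apply hcon
        intro x hxΔ
        simp only [Set.mem_inter_iff, Set.mem_setOf_eq, Set.mem_preimage, Set.mem_union]
        constructor
        · rintro ⟨h1, h2⟩
          by_cases h3 : j + 1 < R x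
          · left
            refine ⟨?_, h3⟩
            have : towerMap f R (x, j) = (x, j + 1) := by
              unfold towerMap; simp only [if_pos h3]
            rwa [this] at h1
          · right
            have hRx : R x = j + 1 := by omega
            refine ⟨?_, hRx⟩
            have : towerMap f R (x, j) = (inducedF f R x, 0) := by
              unfold towerMap; simp only [if_neg h3]
            rwa [this] at h1
        · rintro (⟨h1, h2⟩ | ⟨h1, h2⟩)
          · have : towerMap f R (x, j) = (x, j + 1) := by
              unfold towerMap; simp only [if_pos h2]
            exact ⟨by rwa [this], by omega⟩
          · have h3 : ¬ (j + 1 < R x) := by omega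
            have : towerMap f R (x, j) = (inducedF f R x, 0) := by
              unfold towerMap; simp only [if_neg h3]
            exact ⟨by rwa [this], by omega⟩
      · refine Set.disjoint_left.2 ?_
        rintro x ⟨-, h2⟩ ⟨-, h4⟩
        simp only [Set.mem_setOf_eq] at h2 h4
        omega
    rw [tsum_congr hterm, ENNReal.tsum_add]
    have h2 : ∑' j : ℕ, ν₀ (inducedF f R ⁻¹' {y | (y, 0) ∈ s} ∩ {x | R x = j + 1}) =
        ν₀ ({x | (x, 0) ∈ s} ∩ {x | 0 < R x}) := by
      rw [← measure_iUnion ?_ fun j => (hFmeas hS₀m).inter (hREj (j + 1))]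
      · have hU : (⋃ j : ℕ, inducedF f R ⁻¹' {y | (y, 0) ∈ s} ∩ {x | R x = j + 1}) =
            inducedF f R ⁻¹' {y | (y, 0) ∈ s} ∩ {x | 0 < R x} := by
          ext x
          simp only [Set.mem_iUnion, Set.mem_inter_iff, Set.mem_setOf_eq]
          constructor
          · rintro ⟨j, h1, h2⟩; exact ⟨h1, by omega⟩
          · rintro ⟨h1, h2⟩; exact ⟨R x - 1, h1, by omega⟩
        rw [hU]
        have e1 : ν₀ (inducedF f R ⁻¹' {y | (y, 0) ∈ s} ∩ {x | 0 < R x}) =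
            ν₀ (inducedF f R ⁻¹' {y | (y, 0) ∈ s}) :=
          hcon _ _ fun x hx => by
            simp only [Set.mem_inter_iff, Set.mem_setOf_eq, Set.mem_preimage]
            exact ⟨fun h => h.1, fun h => ⟨h, hRpos x hx⟩⟩
        have e2 : ν₀ (inducedF f R ⁻¹' {y | (y, 0) ∈ s}) = ν₀ {x | (x, 0) ∈ s} := by
          rw [← Measure.map_apply hFmeas hS₀m, hν₀_inv]
        have e3 : ν₀ {x | (x, 0) ∈ s} = ν₀ ({x | (x, 0) ∈ s} ∩ {x | 0 < R x}) :=
          hcon _ _ fun x hx => by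
            simp only [Set.mem_inter_iff, Set.mem_setOf_eq]
            exact ⟨fun h => ⟨h, hRpos x hx⟩, fun h => h.1⟩
        rw [e1, e2, e3]
      · intro i j hij
        refine Set.disjoint_left.2 ?_
        rintro x ⟨-, h2⟩ ⟨-, h4⟩
        simp only [Set.mem_setOf_eq] at h2 h4
        exact hij (by omega)
    rw [h2]
    conv_rhs => rw [tsum_eq_zero_add'
      (f := fun j : ℕ => ν₀ ({x | (x, j) ∈ s} ∩ {x | j < R x})) ENNReal.summable]
    exact add_comm _ _
  -- density representation
  set ρ : M × ℕ → ℝ := fun q => ρ' q.1 / cR with hρdef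
  have hρm : Measurable fun q : M × ℕ => ENNReal.ofReal (ρ q) :=
    ENNReal.measurable_ofReal.comp ((hρ'm.comp measurable_fst).div_const cR)
  have hpoint : ∀ x : M, ENNReal.ofReal (ρ' x / cR) = ENNReal.ofReal (ρ' x) * c⁻¹ := by
    intro x
    rw [ENNReal.ofReal_div_of_pos hcR, hcof, div_eq_mul_inv]
  have hdens : nuTower ν₀ f R =
      (towerMeasure m Δ₀ R).withDensity fun q => ENNReal.ofReal (ρ q) := by
    refine Measure.ext fun s hs => ?_
    rw [withDensity_apply _ hs, hν_apply s hs, towerMeasure,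
      Measure.restrict_sum _ hs, lintegral_sum_measure]
    have hterm : ∀ j : ℕ,
        (∫⁻ q, ENNReal.ofReal (ρ q)
          ∂(((m.restrict (Δ₀ ∩ {x | j < R x})).map (fun x => (x, j))).restrict s)) =
        ν₀ ({x | (x, j) ∈ s} ∩ {x | j < R x}) * c⁻¹ := by
      intro j
      have hE : MeasurableSet {x : M | (x, j) ∈ s} := (hι j) hs
      have hpre : ((fun x : M => (x, j)) ⁻¹' s) = {x : M | (x, j) ∈ s} := rfl
      have h1 : (∫⁻ q, ENNReal.ofReal (ρ q)
          ∂(((m.restrict (Δ₀ ∩ {x | j < R x})).map (fun x => (x, j))).restrict s)) =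
          ∫⁻ x in (fun x => (x, j)) ⁻¹' s, ENNReal.ofReal (ρ (x, j))
            ∂(m.restrict (Δ₀ ∩ {x | j < R x})) := setLIntegral_map hs hρm (hι j)
      rw [h1, hpre]
      have h2 : m.restrict (Δ₀ ∩ {x | j < R x}) = (m.restrict Δ₀).restrict {x | j < R x} := by
        rw [Measure.restrict_restrict (hRj j), Set.inter_comm]
      rw [h2, Measure.restrict_restrict hE]
      have h3 : ν₀ ({x | (x, j) ∈ s} ∩ {x | j < R x}) =
          ∫⁻ x in {x : M | (x, j) ∈ s} ∩ {x | j < R x}, ENNReal.ofReal (ρ' x)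
            ∂(m.restrict Δ₀) := by
        rw [hν₀', withDensity_apply _ (hE.inter (hRj j))]
      rw [h3, ← lintegral_mul_const' c⁻¹ _ (ENNReal.inv_ne_top.2 hc0)]
      refine lintegral_congr fun x => ?_
      exact hpoint x
    rw [tsum_congr hterm, ENNReal.tsum_mul_right, mul_comm]
  have hac : nuTower ν₀ f R ≪ towerMeasure m Δ₀ R := by
    rw [hdens]
    exact withDensity_absolutelyContinuous _ _
  -- ergodicity
  have herg : Ergodic (towerMap f R) (nuTower ν₀ f R) := by
    refine ⟨⟨hT, hinv⟩, ⟨fun s hs hfix => ?_⟩⟩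
    rw [eventuallyConst_set']
    have hS₀m : MeasurableSet {x | (x, 0) ∈ s} := (hι 0) hs
    have hiter : ∀ n : ℕ, (towerMap f R)^[n] ⁻¹' s = s := fun n =>
      Function.IsFixedPt.preimage_iterate hfix n
    have hbase : ∀ x ∈ Δ₀, (inducedF f R x ∈ {y | (y, 0) ∈ s} ↔ x ∈ {y | (y, 0) ∈ s}) := by
      intro x hx
      have hR1 : R x = (R x - 1) + 1 := by have := hRpos x hx; omega
      have h1 : (towerMap f R)^[(R x - 1) + 1] (x, 0) = (inducedF f R x, 0) :=
        towerMap_iterate_eq f R x hR1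
      constructor
      · intro h
        have h2 : (x, 0) ∈ (towerMap f R)^[(R x - 1) + 1] ⁻¹' s := by
          rw [Set.mem_preimage, h1]; exact h
        rwa [hiter] at h2
      · intro h
        have h2 : (x, 0) ∈ (towerMap f R)^[(R x - 1) + 1] ⁻¹' s := by rw [hiter]; exact h
        rw [Set.mem_preimage, h1] at h2
        exact h2
    have haeinv : (inducedF f R) ⁻¹' {x | (x, 0) ∈ s} =ᵐ[ν₀] {x | (x, 0) ∈ s} := by
      rw [MeasureTheory.ae_eq_set]
      constructor
      · refine measure_mono_null (fun x hx => ?_) hν₀Δc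
        by_contra hxΔ
        exact hx.2 ((hbase x (not_not.1 hxΔ)).1 hx.1)
      · refine measure_mono_null (fun x hx => ?_) hν₀Δc
        by_contra hxΔ
        exact hx.2 ((hbase x (not_not.1 hxΔ)).2 hx.1)
    have hlevel : ∀ j : ℕ, ν₀ ({x | (x, j) ∈ s} ∩ {x | j < R x}) =
        ν₀ ({x | (x, 0) ∈ s} ∩ {x | j < R x}) := by
      intro j
      apply hcon
      intro x hx
      simp only [Set.mem_inter_iff, Set.mem_setOf_eq]
      constructor
      · rintro ⟨h1, h2⟩
        refine ⟨?_, h2⟩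
        have h3 : (x, 0) ∈ (towerMap f R)^[j] ⁻¹' s := by
          rw [Set.mem_preimage, towerMap_iterate_lt f R x h2]; exact h1
        rwa [hiter] at h3
      · rintro ⟨h1, h2⟩
        refine ⟨?_, h2⟩
        have h3 : (x, 0) ∈ (towerMap f R)^[j] ⁻¹' s := by rw [hiter]; exact h1
        rw [Set.mem_preimage, towerMap_iterate_lt f R x h2] at h3
        exact h3
    rcases hν₀_erg.quasiErgodic.ae_empty_or_univ₀ hS₀m.nullMeasurableSet haeinv with h | h
    · left
      rw [ae_eq_empty, hν_apply s hs]
      have hz : ∀ j : ℕ, ν₀ ({x | (x, j) ∈ s} ∩ {x | j < R x}) = 0 := fun j => by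
        rw [hlevel j]
        exact measure_mono_null Set.inter_subset_left (ae_eq_empty.1 h)
      rw [tsum_congr hz]
      simp
    · right
      rw [ae_eq_univ]
      have hS₀c : ν₀ {x | (x, 0) ∈ s}ᶜ = 0 := ae_eq_univ.1 h
      have hν1 : nuTower ν₀ f R s = 1 := by
        rw [hν_apply s hs]
        have he : ∀ j : ℕ, ν₀ ({x | (x, j) ∈ s} ∩ {x | j < R x}) = ν₀ {x | j < R x} := by
          intro j
          rw [hlevel j]
          refine le_antisymm (measure_mono Set.inter_subset_right) ?_
          calc ν₀ {x | j < R x}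
              ≤ ν₀ (({x | (x, 0) ∈ s} ∩ {x | j < R x}) ∪ {x | (x, 0) ∈ s}ᶜ) := by
                refine measure_mono fun x hx => ?_
                by_cases hc' : x ∈ {y | (y, 0) ∈ s}
                · exact Or.inl ⟨hc', hx⟩
                · exact Or.inr hc'
            _ ≤ ν₀ ({x | (x, 0) ∈ s} ∩ {x | j < R x}) + ν₀ {x | (x, 0) ∈ s}ᶜ :=
                measure_union_le _ _
            _ = ν₀ ({x | (x, 0) ∈ s} ∩ {x | j < R x}) := by rw [hS₀c, add_zero]
        rw [tsum_congr he, ← hcdef]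
        exact ENNReal.inv_mul_cancel hc0 hcfin
      haveI := hprob
      rw [measure_compl hs (measure_ne_top _ _), hν1, measure_univ, tsub_self]
  -- null complement of the tower set
  have htsm : MeasurableSet (towerSet Δ₀ R) := by
    have h1 : towerSet Δ₀ R = (Prod.fst ⁻¹' Δ₀) ∩ {q : M × ℕ | q.2 < R q.1} := rfl
    rw [h1]
    exact (hΔm.preimage measurable_fst).inter
      (measurableSet_natLt measurable_snd (hmR.comp measurable_fst))
  have htowerNull : towerMeasure m Δ₀ R (towerSet Δ₀ R)ᶜ = 0 := by
    rw [htower_apply _ htsm.compl]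
    have hz : ∀ j : ℕ,
        ((fun x => (x, j)) ⁻¹' (towerSet Δ₀ R)ᶜ) ∩ (Δ₀ ∩ {x | j < R x}) = ∅ := by
      intro j
      rw [Set.eq_empty_iff_forall_notMem]
      rintro x ⟨h1, h2, h3⟩
      exact h1 ⟨h2, h3⟩
    rw [tsum_congr fun j => by rw [hz j, measure_empty]]
    simp
  -- the tower measure is absolutely continuous w.r.t. nuTower
  have hacfull : towerMeasure m Δ₀ R ≪ nuTower ν₀ f R := by
    refine Measure.AbsolutelyContinuous.mk fun s hs h0 => ?_
    rw [hdens, withDensity_apply _ hs] at h0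
    have hae := (lintegral_eq_zero_iff hρm).1 h0
    have hnull : (towerMeasure m Δ₀ R).restrict s
        {q | ENNReal.ofReal (ρ q) ≠ 0} = 0 := by
      rw [Filter.EventuallyEq, ae_iff] at hae
      simpa using hae
    have hGset : MeasurableSet {q : M × ℕ | ENNReal.ofReal (ρ q) ≠ 0} :=
      (hρm (measurableSet_singleton 0)).compl
    rw [Measure.restrict_apply hGset] at hnull
    have h1 : towerMeasure m Δ₀ R (s ∩ towerSet Δ₀ R) = 0 := by
      refine measure_mono_null (fun q hq => ?_) hnull
      obtain ⟨hqs, hqt⟩ := hq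
      have hqt' : q.1 ∈ Δ₀ ∧ q.2 < R q.1 := hqt
      refine ⟨?_, hqs⟩
      have hpos : 0 < ρ q := by
        show 0 < ρ' q.1 / cR
        rw [hρ'Δ _ hqt'.1]
        exact div_pos (hρpos _ hqt'.1) hcR
      simp only [Set.mem_setOf_eq, ne_eq, ENNReal.ofReal_eq_zero, not_le]
      exact hpos
    refine le_antisymm ?_ (zero_le)
    calc towerMeasure m Δ₀ R s
        ≤ towerMeasure m Δ₀ R (s ∩ towerSet Δ₀ R) +
          towerMeasure m Δ₀ R (towerSet Δ₀ R)ᶜ := by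
          refine (measure_mono ?_).trans (measure_union_le _ _)
          intro q hq
          by_cases hqt : q ∈ towerSet Δ₀ R
          · exact Or.inl ⟨hq, hqt⟩
          · exact Or.inr hqt
      _ = 0 := by rw [h1, htowerNull, add_zero]
  -- conclusion
  haveI := hprob
  refine ⟨hprob, hinv, herg, hac, ?_, ρ, hdens, ⟨⟨(CH + B) / cR, by positivity, ?_⟩, ?_,
    ⟨CR, hCR0, ?_⟩⟩, B / cR, by positivity, ?_⟩
  · -- uniqueness
    intro ν' hp' hm' he' hac'
    haveI := hp'
    exact eq_of_ergodic_absolutelyContinuous hT herg hm' (hac'.trans hacfull)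
  · -- Hölder bound for ρ
    intro q hq r hr
    have hq' : q.1 ∈ Δ₀ ∧ q.2 < R q.1 := hq
    have hr' : r.1 ∈ Δ₀ ∧ r.2 < R r.1 := hr
    have hq1 : q.1 ∈ Δ₀ := hq'.1
    have hr1 : r.1 ∈ Δ₀ := hr'.1
    have habs : |ρ q - ρ r| = |ρ₀ q.1 - ρ₀ r.1| / cR := by
      show |ρ' q.1 / cR - ρ' r.1 / cR| = _
      rw [hρ'Δ _ hq1, hρ'Δ _ hr1, div_sub_div_same, abs_div, abs_of_pos hcR]
    rw [habs]
    have hnum : |ρ₀ q.1 - ρ₀ r.1| ≤ (CH + B) * β ^ towerSep f R p q r := by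
      by_cases hlev : q.2 = r.2
      · rw [towerSep, if_pos hlev]
        refine (hCH q.1 hq1 r.1 hr1).trans ?_
        have : (0:ℝ) ≤ β ^ sepTime (inducedF f R) p q.1 r.1 := by positivity
        nlinarith
      · rw [towerSep, if_neg hlev, pow_zero, mul_one]
        have h1 := hρpos q.1 hq1
        have h2 := hρpos r.1 hr1
        have h3 := hρB q.1 hq1
        have h4 := hρB r.1 hr1
        rw [abs_le]
        constructor <;> nlinarith
    calc |ρ₀ q.1 - ρ₀ r.1| / cR ≤ ((CH + B) * β ^ towerSep f R p q r) / cR := by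
          gcongr
      _ = (CH + B) / cR * β ^ towerSep f R p q r := by ring
  · -- positivity of ρ
    intro q hq
    have hq' : q.1 ∈ Δ₀ ∧ q.2 < R q.1 := hq
    show 0 < ρ' q.1 / cR
    rw [hρ'Δ _ hq'.1]
    exact div_pos (hρpos _ hq'.1) hcR
  · -- ratio bound
    intro q hq r hr hidx
    have hq' : q.1 ∈ Δ₀ ∧ q.2 < R q.1 := hq
    have hr' : r.1 ∈ Δ₀ ∧ r.2 < R r.1 := hr
    have hq1 : q.1 ∈ Δ₀ := hq'.1
    have hr1 : r.1 ∈ Δ₀ := hr'.1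
    have hidx' : (p q.1, q.2) = (p r.1, r.2) := hidx
    injection hidx' with hpq hlev
    have hratio : ρ q / ρ r = ρ₀ q.1 / ρ₀ r.1 := by
      show ρ' q.1 / cR / (ρ' r.1 / cR) = _
      rw [hρ'Δ _ hq1, hρ'Δ _ hr1, div_div_div_cancel_right₀ hcR.ne']
    rw [hratio, towerSep, if_pos hlev]
    exact hCRr q.1 hq1 r.1 hr1 hpq
  · -- bounds on ρ
    intro q hq
    have hq' : q.1 ∈ Δ₀ ∧ q.2 < R q.1 := hq
    constructor
    · show 0 < ρ' q.1 / cR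
      rw [hρ'Δ _ hq'.1]
      exact div_pos (hρpos _ hq'.1) hcR
    · show ρ' q.1 / cR ≤ B / cR
      rw [hρ'Δ _ hq'.1]
      gcongr
      exact hρB _ hq'.1


end WGMPaper
end
end

section
/- Let T : Δ → Δ be the tower map of an aperiodic induced weak Gibbs Markov map f^R with a coprime block. Then for every n ≥ 1, every element ω of 𝒫₀ⁿ = ⋁_{i=0}^{n−1} (f^R)^{−i}(𝒫₀), every ε₀ > 0 and every ℓ₀ ≥ 0, there exists t₀ ∈ ℕ such that for all t ≥ t₀, m(Tᵗ(ω)) ≥ m(⋃_{j ≤ ℓ₀} Δ_j) − ε₀, where Δ_j is the j-th level of the tower. -/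
open MeasureTheory Set Filter Topology

noncomputable section

namespace WGMPaper


section AuxLemmas


variable {X : Type*} {Δ₀ : Set X} {F : X → X} {p : X → ℕ}

lemma pElem_subset (i : ℕ) : pElem Δ₀ p i ⊆ Δ₀ := inter_subset_left

lemma mem_pElem {x : X} {i : ℕ} : x ∈ pElem Δ₀ p i ↔ x ∈ Δ₀ ∧ p x = i := by
  simp [pElem]

lemma pElem_disjoint {i j : ℕ} (h : i ≠ j) : pElem Δ₀ p i ∩ pElem Δ₀ p j = ∅ := by
  ext x; simp only [mem_inter_iff, mem_pElem, mem_empty_iff_false, iff_false]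
  rintro ⟨⟨-, h1⟩, ⟨-, h2⟩⟩; exact h (h1 ▸ h2 ▸ rfl)

lemma iUnion_pElem : ⋃ i, pElem Δ₀ p i = Δ₀ := by
  ext x; simp only [mem_iUnion, mem_pElem]
  exact ⟨fun ⟨i, h, _⟩ => h, fun h => ⟨p x, h, rfl⟩⟩

lemma measurableSet_pElem [MeasurableSpace X] (hΔ : MeasurableSet Δ₀)
    (hp : Measurable p) (i : ℕ) : MeasurableSet (pElem Δ₀ p i) :=
  hΔ.inter (hp (measurableSet_singleton i))

lemma pElemN_subset (w : List ℕ) : pElemN Δ₀ F p w ⊆ Δ₀ := inter_subset_left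

lemma pElemN_nil : pElemN Δ₀ F p ([] : List ℕ) = Δ₀ := by
  ext x; simp [pElemN]

lemma pElemN_cons (hm : MapsTo F Δ₀ Δ₀) (a : ℕ) (w : List ℕ) :
    pElemN Δ₀ F p (a :: w) = pElem Δ₀ p a ∩ F ⁻¹' pElemN Δ₀ F p w := by
  ext x
  simp only [pElemN, pElem, mem_inter_iff, mem_setOf_eq, mem_preimage, mem_singleton_iff]
  constructor
  · rintro ⟨hx, hw⟩
    refine ⟨⟨hx, ?_⟩, hm hx, fun k => ?_⟩
    · exact hw ⟨0, Nat.succ_pos _⟩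
    · have := hw ⟨(k : ℕ) + 1, Nat.succ_lt_succ k.2⟩
      simpa [Function.iterate_succ_apply] using this
  · rintro ⟨⟨hx, ha⟩, -, hw⟩
    refine ⟨hx, fun k => ?_⟩
    rcases k with ⟨k, hk⟩
    cases k with
    | zero => simpa using ha
    | succ k =>
      have := hw ⟨k, Nat.lt_of_succ_lt_succ hk⟩
      simpa [Function.iterate_succ_apply] using this

lemma pElemN_single : pElemN Δ₀ F p [a] = pElem Δ₀ p a := by
  ext x
  simp only [pElemN, pElem, mem_inter_iff, mem_setOf_eq, mem_preimage, mem_singleton_iff]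
  constructor
  · rintro ⟨hx, hw⟩; exact ⟨hx, by simpa using hw ⟨0, Nat.one_pos⟩⟩
  · rintro ⟨hx, ha⟩
    refine ⟨hx, fun k => ?_⟩
    rcases k with ⟨k, hk⟩
    have hk0 : k = 0 := Nat.lt_one_iff.mp (by simpa using hk)
    subst hk0; simpa using ha

lemma measurableSet_pElemN [MeasurableSpace X] (hΔ : MeasurableSet Δ₀)
    (hp : Measurable p) (hF : Measurable F) (w : List ℕ) :
    MeasurableSet (pElemN Δ₀ F p w) := by
  have : pElemN Δ₀ F p w =
      Δ₀ ∩ ⋂ k : Fin w.length, (F^[(k : ℕ)]) ⁻¹' (p ⁻¹' {w.get k}) := by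
    ext x; simp [pElemN]
  rw [this]
  exact hΔ.inter (MeasurableSet.iInter fun k =>
    (hF.iterate (k : ℕ)) (hp (measurableSet_singleton _)))

lemma mem_pElemN_word {x : X} (hx : x ∈ Δ₀) (k : ℕ) :
    x ∈ pElemN Δ₀ F p (List.ofFn fun i : Fin k => p (F^[(i : ℕ)] x)) := by
  refine ⟨hx, fun i => ?_⟩
  rw [List.get_ofFn]
  simp

lemma pElemN_subset_pElem_head {w : List ℕ} (hw : w ≠ []) :
    pElemN Δ₀ F p w ⊆ pElem Δ₀ p (w.headI) := by
  intro x hx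
  rcases w with _ | ⟨a, w⟩
  · exact absurd rfl hw
  · exact ⟨hx.1, by simpa using hx.2 ⟨0, Nat.succ_pos _⟩⟩



section MeasureLemmas

variable {M : Type*} [MeasurableSpace M] {m : Measure M} {Δ₀ : Set M} {F : M → M}
  {p : M → ℕ} {J : M → ℝ} {CF β δ₀ : ℝ}

lemma IsWGM.null_image (hW : IsWGM m Δ₀ F p J CF β δ₀) {A : Set M} (hA : A ⊆ Δ₀)
    (h : m A = 0) : m (F '' A) = 0 := by
  have hsub : F '' A ⊆ ⋃ i, F '' (A ∩ pElem Δ₀ p i) := by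
    rintro y ⟨x, hx, rfl⟩
    exact mem_iUnion.2 ⟨p x, ⟨x, ⟨hx, mem_pElem.2 ⟨hA hx, rfl⟩⟩, rfl⟩⟩
  refine measure_mono_null hsub (measure_iUnion_null fun i => ?_)
  set B := toMeasurable m A with hB
  have hBnull : m B = 0 := by rw [measure_toMeasurable]; exact h
  have hmono : F '' (A ∩ pElem Δ₀ p i) ⊆ F '' (B ∩ pElem Δ₀ p i) :=
    image_mono (inter_subset_inter_left _ (subset_toMeasurable m A))
  refine measure_mono_null hmono ?_
  have hmeas : MeasurableSet (B ∩ pElem Δ₀ p i) :=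
    (measurableSet_toMeasurable m A).inter (measurableSet_pElem hW.meas_Δ₀ hW.meas_p i)
  rw [hW.nonsing i _ inter_subset_right hmeas]
  exact setLIntegral_measure_zero _ _ (measure_mono_null inter_subset_left hBnull)

lemma IsWGM.null_image_iter (hW : IsWGM m Δ₀ F p J CF β δ₀) {A : Set M} (hA : A ⊆ Δ₀)
    (h : m A = 0) : ∀ k : ℕ, m (F^[k] '' A) = 0 := by
  intro k
  induction k with
  | zero => simpa using h
  | succ k ih =>
    have hsub : F^[k] '' A ⊆ Δ₀ := by
      rintro y ⟨x, hx, rfl⟩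
      exact hW.mapsTo.iterate k (hA hx)
    have : F^[k+1] '' A = F '' (F^[k] '' A) := by
      rw [Function.iterate_succ', Set.image_comp]
    rw [this]
    exact hW.null_image hsub ih

lemma IsWGM.null_of_image_null (hW : IsWGM m Δ₀ F p J CF β δ₀) {A : Set M} {i : ℕ}
    (hAm : MeasurableSet A) (hAi : A ⊆ pElem Δ₀ p i) (h : m (F '' A) = 0) :
    m A = 0 := by
  have hint : ∫⁻ a in A, ENNReal.ofReal (J a) ∂m = 0 := by
    rw [← hW.nonsing i A hAi hAm]; exact h
  have hmeasJ : Measurable fun a => ENNReal.ofReal (J a) := hW.meas_J.ennreal_ofReal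
  have hae : ∀ᵐ x ∂m.restrict A, ENNReal.ofReal (J x) = 0 :=
    (lintegral_eq_zero_iff hmeasJ).1 hint
  have hae' : ∀ᵐ x ∂m, x ∈ A → ENNReal.ofReal (J x) = 0 :=
    (ae_restrict_iff' hAm).1 hae
  have hsub : A ⊆ {x | ¬ (x ∈ A → ENNReal.ofReal (J x) = 0)} := by
    intro x hx himp
    exact (ENNReal.ofReal_pos.mpr (hW.J_pos x (pElem_subset i (hAi hx)))).ne' (himp hx)
  exact measure_mono_null hsub hae'

lemma IsWGM.null_preimage (hW : IsWGM m Δ₀ F p J CF β δ₀) {B : Set M}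
    (h : m (B ∩ Δ₀) = 0) : m (F ⁻¹' B ∩ Δ₀) = 0 := by
  set C := toMeasurable m (B ∩ Δ₀) with hC
  have hCm : MeasurableSet C := measurableSet_toMeasurable m _
  have hCnull : m C = 0 := by rw [measure_toMeasurable]; exact h
  have h1 : (m.restrict Δ₀).map F C = 0 := by
    refine hW.quasi ?_
    rw [Measure.restrict_apply' hW.meas_Δ₀]
    exact measure_mono_null inter_subset_left hCnull
  rw [Measure.map_apply hW.meas_F hCm, Measure.restrict_apply' hW.meas_Δ₀] at h1
  refine measure_mono_null ?_ h1
  intro x ⟨hxB, hxΔ⟩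
  exact ⟨subset_toMeasurable m _ ⟨hxB, hW.mapsTo hxΔ⟩, hxΔ⟩

lemma IsWGM.null_preimage_iter (hW : IsWGM m Δ₀ F p J CF β δ₀) {B : Set M}
    (h : m (B ∩ Δ₀) = 0) : ∀ k : ℕ, m (F^[k] ⁻¹' B ∩ Δ₀) = 0 := by
  intro k
  induction k with
  | zero => simpa using h
  | succ k ih =>
    have : F^[k+1] ⁻¹' B = F ⁻¹' (F^[k] ⁻¹' B) := by
      rw [Function.iterate_succ]; rfl
    rw [this]
    exact hW.null_preimage ih

lemma IsWGM.markov_dichotomy (hW : IsWGM m Δ₀ F p J CF β δ₀) {a q : ℕ}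
    (h : 0 < m (pElem Δ₀ p a ∩ F ⁻¹' pElem Δ₀ p q)) :
    m (pElem Δ₀ p q \ F '' pElem Δ₀ p a) = 0 := by
  have hapos : 0 < m (pElem Δ₀ p a) :=
    lt_of_lt_of_le h (measure_mono inter_subset_left)
  obtain ⟨S, hS⟩ := hW.markov a hapos
  rw [Measure.restrict_apply' hW.meas_Δ₀] at hS
  have hsym : m (((F '' pElem Δ₀ p a \ ⋃ j ∈ S, pElem Δ₀ p j) ∪
      ((⋃ j ∈ S, pElem Δ₀ p j) \ F '' pElem Δ₀ p a)) ∩ Δ₀) = 0 := hS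
  by_cases hq : q ∈ S
  · -- q covered by the image of pElem a mod 0
    refine measure_mono_null ?_ hsym
    intro x ⟨hxq, hxim⟩
    refine ⟨Or.inr ⟨mem_biUnion hq hxq, hxim⟩, pElem_subset q hxq⟩
  · -- otherwise the intersection is null, contradiction
    exfalso
    set A := pElem Δ₀ p a ∩ F ⁻¹' pElem Δ₀ p q with hA
    have hAm : MeasurableSet A :=
      (measurableSet_pElem hW.meas_Δ₀ hW.meas_p a).inter
        (hW.meas_F (measurableSet_pElem hW.meas_Δ₀ hW.meas_p q))
    have himnull : m (F '' A) = 0 := by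
      refine measure_mono_null ?_ hsym
      intro y hy
      rw [hA, Set.image_inter_preimage] at hy
      have hyq : y ∈ pElem Δ₀ p q := hy.2
      have hynotS : y ∉ ⋃ j ∈ S, pElem Δ₀ p j := by
        intro hmem
        obtain ⟨j, hjS, hyj⟩ := mem_iUnion₂.1 hmem
        rcases hyq with ⟨-, hq1⟩
        rcases hyj with ⟨-, hq2⟩
        simp only [mem_preimage, mem_singleton_iff] at hq1 hq2
        exact hq (by rw [← hq1, hq2]; exact hjS)
      exact ⟨Or.inl ⟨hy.1, hynotS⟩, pElem_subset q hyq⟩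
    exact absurd (hW.null_of_image_null hAm inter_subset_left himnull) h.ne'

lemma IsWGM.cyl_dichotomy (hW : IsWGM m Δ₀ F p J CF β δ₀) :
    ∀ (w : List ℕ), w ≠ [] → ∀ q : ℕ,
      0 < m (pElemN Δ₀ F p w ∩ F^[w.length] ⁻¹' pElem Δ₀ p q) →
      m (pElem Δ₀ p q \ F^[w.length] '' pElemN Δ₀ F p w) = 0 := by
  intro w
  induction w with
  | nil => intro h; exact absurd rfl h
  | cons a w' ih =>
    intro _ q h
    rcases eq_or_ne w' [] with hw' | hw'
    · subst hw'
      rw [pElemN_single] at h ⊢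
      simp only [List.length_singleton, Function.iterate_one] at h ⊢
      exact hW.markov_dichotomy h
    · -- inductive step
      set Z' := pElemN Δ₀ F p w' with hZ'
      have hlen : (a :: w').length = w'.length + 1 := rfl
      have hdecomp : pElemN Δ₀ F p (a :: w') = pElem Δ₀ p a ∩ F ⁻¹' Z' :=
        pElemN_cons hW.mapsTo a w'
      have hpre : F^[w'.length + 1] ⁻¹' pElem Δ₀ p q =
          F ⁻¹' (F^[w'.length] ⁻¹' pElem Δ₀ p q) := by
        rw [Function.iterate_succ]; rfl
      -- positivity of the inner set
      have hpos' : 0 < m (Z' ∩ F^[w'.length] ⁻¹' pElem Δ₀ p q) := by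
        by_contra hc
        push_neg at hc
        have hc0 : m (Z' ∩ F^[w'.length] ⁻¹' pElem Δ₀ p q) = 0 := le_antisymm hc zero_le
        have hnull := hW.null_preimage (B := Z' ∩ F^[w'.length] ⁻¹' pElem Δ₀ p q)
          (measure_mono_null inter_subset_left hc0)
        refine absurd ?_ h.ne'
        refine measure_mono_null ?_ hnull
        intro x hx
        rw [hdecomp, hlen, hpre] at hx
        obtain ⟨⟨hxa, hxZ'⟩, hxq⟩ := hx
        exact ⟨⟨hxZ', hxq⟩, pElem_subset a hxa⟩
      have hIH : m (pElem Δ₀ p q \ F^[w'.length] '' Z') = 0 := ih hw' q hpos'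
      -- head of w'
      have hZ'b : Z' ⊆ pElem Δ₀ p w'.headI := pElemN_subset_pElem_head hw'
      have hposab : 0 < m (pElem Δ₀ p a ∩ F ⁻¹' pElem Δ₀ p w'.headI) := by
        refine lt_of_lt_of_le h (measure_mono ?_)
        intro x hx
        rw [hdecomp] at hx
        exact ⟨hx.1.1, hZ'b hx.1.2⟩
      have hNb : m (pElem Δ₀ p w'.headI \ F '' pElem Δ₀ p a) = 0 :=
        hW.markov_dichotomy hposab
      set N := Z' \ F '' pElemN Δ₀ F p (a :: w') with hN
      have hNnull : m N = 0 := by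
        refine measure_mono_null ?_ hNb
        intro x ⟨hxZ', hxnot⟩
        refine ⟨hZ'b hxZ', fun hxim => hxnot ?_⟩
        rw [hdecomp, Set.image_inter_preimage]
        exact ⟨hxim, hxZ'⟩
      -- conclusion
      have himg : F^[w'.length + 1] '' pElemN Δ₀ F p (a :: w') =
          F^[w'.length] '' (F '' pElemN Δ₀ F p (a :: w')) := by
        rw [Function.iterate_succ, Set.image_comp]
      rw [hlen, himg]
      have hsub : pElem Δ₀ p q \ F^[w'.length] '' (F '' pElemN Δ₀ F p (a :: w')) ⊆
          (pElem Δ₀ p q \ F^[w'.length] '' Z') ∪ F^[w'.length] '' N := by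
        intro y ⟨hyq, hynot⟩
        by_cases hy : y ∈ F^[w'.length] '' Z'
        · obtain ⟨z, hz, rfl⟩ := hy
          by_cases hz' : z ∈ F '' pElemN Δ₀ F p (a :: w')
          · exact absurd ⟨z, hz', rfl⟩ hynot
          · exact Or.inr ⟨z, ⟨hz, hz'⟩, rfl⟩
        · exact Or.inl ⟨hyq, hy⟩
      refine measure_mono_null hsub (measure_union_null hIH ?_)
      exact hW.null_image_iter (fun x hx => pElemN_subset w' hx.1) hNnull _

end MeasureLemmas

section FullReachSection

variable {M : Type*} [MeasurableSpace M] {m : Measure M} {f : M → M} {Δ₀ : Set M}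
  {R : M → ℕ} {p : M → ℕ} {J : M → ℝ} {CF β δ₀ : ℝ}

/-- `A` fully reaches `pElem q` (mod 0) at exact tower time `t`. -/
def FullReach (m : Measure M) (f : M → M) (Δ₀ : Set M) (R p : M → ℕ)
    (A : Set M) (t q : ℕ) : Prop :=
  ∃ k : ℕ, ∃ Z : Set M, Z ⊆ A ∧
    (∀ x ∈ Z, ∑ i ∈ Finset.range k, R ((inducedF f R)^[i] x) = t) ∧
    m (pElem Δ₀ p q \ (inducedF f R)^[k] '' Z) = 0

lemma FullReach.mono {A A' : Set M} (hAA : A ⊆ A') {t q : ℕ}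
    (h : FullReach m f Δ₀ R p A t q) : FullReach m f Δ₀ R p A' t q := by
  obtain ⟨k, Z, hZA, hZt, hZq⟩ := h
  exact ⟨k, Z, hZA.trans hAA, hZt, hZq⟩

lemma timeSum_const (hI : IsInducedWGM m f Δ₀ R p J CF β δ₀) {w : List ℕ} {x y : M}
    (hx : x ∈ pElemN Δ₀ (inducedF f R) p w) (hy : y ∈ pElemN Δ₀ (inducedF f R) p w) :
    ∑ i ∈ Finset.range w.length, R ((inducedF f R)^[i] x) =
      ∑ i ∈ Finset.range w.length, R ((inducedF f R)^[i] y) := by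
  refine Finset.sum_congr rfl fun i hi => ?_
  rw [Finset.mem_range] at hi
  have hxi := hx.2 ⟨i, hi⟩
  have hyi := hy.2 ⟨i, hi⟩
  exact hI.R_const _ (hI.toIsWGM.mapsTo.iterate i hx.1) _
    (hI.toIsWGM.mapsTo.iterate i hy.1) (hxi.trans hyi.symm)

lemma FullReach.trans (hI : IsInducedWGM m f Δ₀ R p J CF β δ₀) {A : Set M}
    {t t' q q' : ℕ} (h1 : FullReach m f Δ₀ R p A t q)
    (h2 : FullReach m f Δ₀ R p (pElem Δ₀ p q) t' q') :
    FullReach m f Δ₀ R p A (t + t') q' := by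
  obtain ⟨k, Z, hZA, hZt, hZq⟩ := h1
  obtain ⟨k', Z', hZ'q, hZ't, hZ'cov⟩ := h2
  set F := inducedF f R
  refine ⟨k + k', Z ∩ F^[k] ⁻¹' Z', inter_subset_left.trans hZA, ?_, ?_⟩
  · intro x ⟨hxZ, hxZ'⟩
    rw [Finset.sum_range_add]
    have h1' : ∑ i ∈ Finset.range k, R (F^[i] x) = t := hZt x hxZ
    have h2' : ∑ i ∈ Finset.range k', R (F^[k + i] x) = t' := by
      have := hZ't (F^[k] x) hxZ'
      rw [← this]
      refine Finset.sum_congr rfl fun i _ => ?_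
      rw [add_comm k i, Function.iterate_add_apply]
    rw [h1', h2']
  · have himg : F^[k + k'] '' (Z ∩ F^[k] ⁻¹' Z') =
        F^[k'] '' (F^[k] '' (Z ∩ F^[k] ⁻¹' Z')) := by
      rw [add_comm k k', Function.iterate_add, Set.image_comp]
    rw [himg, Set.image_inter_preimage]
    set N := Z' \ F^[k] '' Z with hN
    have hNnull : m N = 0 := by
      refine measure_mono_null ?_ hZq
      intro x ⟨hxZ', hxnot⟩
      exact ⟨hZ'q hxZ', hxnot⟩
    have hsub : pElem Δ₀ p q' \ F^[k'] '' (F^[k] '' Z ∩ Z') ⊆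
        (pElem Δ₀ p q' \ F^[k'] '' Z') ∪ F^[k'] '' N := by
      intro y ⟨hyq, hynot⟩
      by_cases hy : y ∈ F^[k'] '' Z'
      · obtain ⟨z, hz, rfl⟩ := hy
        by_cases hz' : z ∈ F^[k] '' Z
        · exact absurd ⟨z, ⟨hz', hz⟩, rfl⟩ hynot
        · exact Or.inr ⟨z, ⟨hz, hz'⟩, rfl⟩
      · exact Or.inl ⟨hyq, hy⟩
    refine measure_mono_null hsub (measure_union_null hZ'cov ?_)
    exact hI.toIsWGM.null_image_iter
      (fun x hx => pElem_subset q (hZ'q hx.1)) hNnull _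

lemma FullReach_of_cyl (hI : IsInducedWGM m f Δ₀ R p J CF β δ₀) {w : List ℕ}
    (hw : w ≠ []) {q : ℕ}
    (hpos : 0 < m (pElemN Δ₀ (inducedF f R) p w ∩
      (inducedF f R)^[w.length] ⁻¹' pElem Δ₀ p q)) :
    ∃ t, FullReach m f Δ₀ R p (pElemN Δ₀ (inducedF f R) p w) t q := by
  set F := inducedF f R
  set Z := pElemN Δ₀ F p w ∩ F^[w.length] ⁻¹' pElem Δ₀ p q with hZdef
  have hne : Z.Nonempty := nonempty_of_measure_ne_zero hpos.ne'
  obtain ⟨x₀, hx₀⟩ := hne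
  refine ⟨∑ i ∈ Finset.range w.length, R (F^[i] x₀),
    w.length, Z, inter_subset_left, ?_, ?_⟩
  · intro x hx
    exact timeSum_const hI hx.1 hx₀.1
  · have : pElem Δ₀ p q \ F^[w.length] '' Z ⊆
        pElem Δ₀ p q \ F^[w.length] '' pElemN Δ₀ F p w := by
      rw [hZdef, Set.image_inter_preimage]
      intro y ⟨hyq, hynot⟩
      exact ⟨hyq, fun hy => hynot ⟨hy, hyq⟩⟩
    exact measure_mono_null this (hI.toIsWGM.cyl_dichotomy w hw q hpos)

lemma FullReach_of_aperiodic (hI : IsInducedWGM m f Δ₀ R p J CF β δ₀)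
    (hap : AperiodicWGM m Δ₀ (inducedF f R) p) {a b : ℕ}
    (ha : 0 < m (pElem Δ₀ p a)) (hb : 0 < m (pElem Δ₀ p b)) :
    ∃ t, FullReach m f Δ₀ R p (pElem Δ₀ p a) t b := by
  set F := inducedF f R
  obtain ⟨k₀, hk₀⟩ := hap a b ha hb
  set k := k₀ + 1 with hk
  have hpos : 0 < m (pElem Δ₀ p a ∩ F^[k] ⁻¹' pElem Δ₀ p b) :=
    hk₀ k (Nat.le_succ k₀)
  -- select a cylinder of length k with positive intersection
  have hcover : pElem Δ₀ p a ∩ F^[k] ⁻¹' pElem Δ₀ p b ⊆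
      ⋃ w : {l : List ℕ // l.length = k},
        (pElemN Δ₀ F p (w : List ℕ) ∩ F^[k] ⁻¹' pElem Δ₀ p b ∩ pElem Δ₀ p a) := by
    intro x ⟨hxa, hxb⟩
    refine mem_iUnion.2 ⟨⟨List.ofFn fun i : Fin k => p (F^[(i : ℕ)] x), by simp [hk]⟩,
      ⟨⟨?_, hxb⟩, hxa⟩⟩
    exact mem_pElemN_word (pElem_subset a hxa) k
  have hex : ∃ w : {l : List ℕ // l.length = k},
      0 < m (pElemN Δ₀ F p (w : List ℕ) ∩ F^[k] ⁻¹' pElem Δ₀ p b ∩ pElem Δ₀ p a) := by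
    by_contra hc
    push_neg at hc
    have : m (pElem Δ₀ p a ∩ F^[k] ⁻¹' pElem Δ₀ p b) = 0 := by
      refine measure_mono_null hcover (measure_iUnion_null fun w => ?_)
      exact le_antisymm (hc w) zero_le
    exact absurd this hpos.ne'
  obtain ⟨⟨w, hwlen⟩, hwpos⟩ := hex
  have hwne : w ≠ [] := by
    intro hnil
    rw [hnil] at hwlen
    simp [hk] at hwlen
  -- the head of w is a
  have hne : (pElemN Δ₀ F p w ∩ F^[k] ⁻¹' pElem Δ₀ p b ∩ pElem Δ₀ p a).Nonempty :=
    nonempty_of_measure_ne_zero hwpos.ne'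
  obtain ⟨x, ⟨hxw, -⟩, hxa⟩ := hne
  have hhead : w.headI = a := by
    have h1 : x ∈ pElem Δ₀ p w.headI := pElemN_subset_pElem_head hwne hxw
    have := (mem_pElem.1 h1).2
    rw [(mem_pElem.1 hxa).2] at this
    exact this.symm
  have hsub : pElemN Δ₀ F p w ⊆ pElem Δ₀ p a := hhead ▸ pElemN_subset_pElem_head hwne
  have hpos' : 0 < m (pElemN Δ₀ F p w ∩ F^[w.length] ⁻¹' pElem Δ₀ p b) := by
    rw [hwlen]
    exact lt_of_lt_of_le hwpos (measure_mono inter_subset_left)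
  obtain ⟨t, ht⟩ := FullReach_of_cyl hI hwne hpos'
  exact ⟨t, ht.mono hsub⟩

end FullReachSection

section NumberTheory

lemma finset_gcd_bezout {ι : Type*} [DecidableEq ι] (s : Finset ι) (g : ι → ℕ) :
    ∃ z : ι → ℤ, ∑ i ∈ s, z i * g i = s.gcd g := by
  induction s using Finset.induction_on with
  | empty => exact ⟨0, by simp⟩
  | @insert a s ha ih =>
    obtain ⟨z, hz⟩ := ih
    set g' := s.gcd g with hg'
    refine ⟨fun i => if i = a then Nat.gcdA (g a) g' else Nat.gcdB (g a) g' * z i, ?_⟩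
    rw [Finset.sum_insert ha, Finset.gcd_insert]
    have hrest : ∑ i ∈ s, (if i = a then Nat.gcdA (g a) g'
        else Nat.gcdB (g a) g' * z i) * g i = Nat.gcdB (g a) g' * g' := by
      rw [← hz, Finset.mul_sum]
      refine Finset.sum_congr rfl fun i hi => ?_
      rw [if_neg (by rintro rfl; exact ha hi)]
      ring
    rw [hrest]
    have hbeta : (fun i => if i = a then Nat.gcdA (g a) g'
        else Nat.gcdB (g a) g' * z i) a = Nat.gcdA (g a) g' := by simp
    rw [hbeta]
    have : GCDMonoid.gcd (g a) g' = Nat.gcd (g a) g' := rfl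
    rw [this, Nat.gcd_eq_gcd_ab]
    ring

lemma semigroup_rep {N : ℕ} (hN : 0 < N) (r : Fin N → ℕ) (hr : ∀ i, 0 < r i)
    (hgcd : Finset.univ.gcd r = 1) :
    ∃ B : ℕ, ∀ s ≥ B, ∃ c : Fin N → ℕ, ∑ i, c i * r i = s := by
  obtain ⟨z, hz⟩ := finset_gcd_bezout Finset.univ r
  rw [hgcd] at hz
  push_cast at hz
  set P := ∑ i, r i with hP
  have hPpos : 0 < P :=
    Finset.sum_pos (fun i _ => hr i) ⟨⟨0, hN⟩, Finset.mem_univ _⟩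
  set Z := Finset.univ.sup fun i => (z i).natAbs with hZ
  refine ⟨P * (P * Z + 1), fun s hs => ?_⟩
  set q := s / P with hq
  set ρ := s % P with hρ
  have hqge : P * Z + 1 ≤ q := by
    have := Nat.div_le_div_right (c := P) hs
    rwa [Nat.mul_div_cancel_left _ hPpos] at this
  have hρlt : ρ < P := Nat.mod_lt _ hPpos
  have hnonneg : ∀ i, 0 ≤ (q : ℤ) + ρ * z i := by
    intro i
    have habs : |z i| ≤ (Z : ℤ) := by
      rw [Int.abs_eq_natAbs]
      exact_mod_cast Finset.le_sup (f := fun i => (z i).natAbs) (Finset.mem_univ i)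
    have hρP : (ρ : ℤ) ≤ P := by exact_mod_cast hρlt.le
    have hρ0 : (0:ℤ) ≤ ρ := Int.ofNat_nonneg ρ
    have h1 : (ρ : ℤ) * |z i| ≤ (P:ℤ) * Z :=
      mul_le_mul hρP habs (abs_nonneg _) (by positivity)
    have h3 : -((ρ:ℤ) * |z i|) ≤ (ρ:ℤ) * z i := by
      rw [← mul_neg]
      exact mul_le_mul_of_nonneg_left (neg_abs_le (z i)) hρ0
    have h4 : (P:ℤ) * Z < (q : ℤ) := by exact_mod_cast hqge
    linarith
  refine ⟨fun i => ((q : ℤ) + ρ * z i).toNat, ?_⟩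
  have hcast : ((∑ i, ((q : ℤ) + ρ * z i).toNat * r i : ℕ) : ℤ) = (s : ℤ) := by
    push_cast
    have : ∀ i ∈ Finset.univ, (((q : ℤ) + ρ * z i).toNat : ℤ) * r i =
        ((q : ℤ) + ρ * z i) * r i := by
      intro i _
      rw [Int.toNat_of_nonneg (hnonneg i)]
    rw [Finset.sum_congr rfl this]
    have hexp : ∑ i, ((q : ℤ) + ρ * z i) * r i = q * P + ρ * ∑ i, z i * r i := by
      rw [hP]
      push_cast
      rw [Finset.mul_sum, Finset.mul_sum, ← Finset.sum_add_distrib]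
      refine Finset.sum_congr rfl fun i _ => ?_
      ring
    rw [hexp, hz, mul_one]
    have h5 : P * q + ρ = s := by rw [hq, hρ]; exact Nat.div_add_mod s P
    calc (q:ℤ) * P + ρ = ((P * q + ρ : ℕ) : ℤ) := by push_cast; ring
      _ = s := by rw [h5]
  exact_mod_cast hcast

end NumberTheory

section Chain

variable {M : Type*} [MeasurableSpace M] {m : Measure M} {f : M → M} {Δ₀ : Set M}
  {R : M → ℕ} {p : M → ℕ} {J : M → ℝ} {CF β δ₀ : ℝ}

lemma FullReach_loop (hI : IsInducedWGM m f Δ₀ R p J CF β δ₀) {N : ℕ}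
    {ι : Fin N → ℕ} {r : Fin N → ℕ}
    (hRι : ∀ i, ∀ x ∈ pElem Δ₀ p (ι i), R x = r i)
    (hfull : ∀ i, m ((⋃ j, pElem Δ₀ p (ι j)) \ inducedF f R '' pElem Δ₀ p (ι i)) = 0)
    (i j : Fin N) :
    FullReach m f Δ₀ R p (pElem Δ₀ p (ι i)) (r i) (ι j) := by
  set F := inducedF f R
  refine ⟨1, pElem Δ₀ p (ι i) ∩ F ⁻¹' pElem Δ₀ p (ι j), inter_subset_left, ?_, ?_⟩
  · intro x hx
    simpa using hRι i x hx.1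
  · rw [Function.iterate_one, Set.image_inter_preimage]
    refine measure_mono_null ?_ (hfull i)
    rintro y ⟨hyj, hynot⟩
    exact ⟨mem_iUnion.2 ⟨j, hyj⟩, fun hy => hynot ⟨hy, hyj⟩⟩

lemma FullReach_chain (hI : IsInducedWGM m f Δ₀ R p J CF β δ₀) {N : ℕ} (hN : 0 < N)
    {ι : Fin N → ℕ} {r : Fin N → ℕ}
    (hRι : ∀ i, ∀ x ∈ pElem Δ₀ p (ι i), R x = r i)
    (hfull : ∀ i, m ((⋃ j, pElem Δ₀ p (ι j)) \ inducedF f R '' pElem Δ₀ p (ι i)) = 0) :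
    ∀ (total : ℕ) (c : Fin N → ℕ), ∑ i, c i = total → ∀ i : Fin N,
      FullReach m f Δ₀ R p (pElem Δ₀ p (ι i)) (r i + ∑ j, c j * r j)
        (ι ⟨0, hN⟩) := by
  intro total
  induction total with
  | zero =>
    intro c hc i
    have hzero : ∀ j, c j = 0 := by
      intro j
      exact (Finset.sum_eq_zero_iff.1 hc) j (Finset.mem_univ j)
    have : ∑ j, c j * r j = 0 := by
      simp [hzero]
    rw [this, add_zero]
    exact FullReach_loop hI hRι hfull i ⟨0, hN⟩
  | succ t IH =>
    intro c hc i
    have hex : ∃ j, 0 < c j := by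
      by_contra hcon
      push_neg at hcon
      have : ∑ j, c j = 0 := Finset.sum_eq_zero fun j _ => Nat.le_zero.1 (hcon j)
      omega
    obtain ⟨j, hj⟩ := hex
    obtain ⟨d, hd⟩ : ∃ d, c j = d + 1 := ⟨c j - 1, by omega⟩
    set c' := Function.update c j d with hc'
    have hsum' : ∑ i, c' i = t := by
      rw [hc', Finset.sum_update_of_mem (Finset.mem_univ j)]
      have h2 := Finset.sum_eq_sum_sdiff_singleton_add (Finset.mem_univ j) c
      omega
    have hsumr : r j + ∑ i, c' i * r i = ∑ i, c i * r i := by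
      have hcongr : ∀ x, c' x * r x =
          Function.update (fun x => c x * r x) j (d * r j) x := by
        intro x
        rcases eq_or_ne x j with rfl | hx
        · simp [hc']
        · simp [hc', Function.update_of_ne hx]
      rw [Finset.sum_congr rfl (fun x _ => hcongr x),
        Finset.sum_update_of_mem (Finset.mem_univ j),
        Finset.sum_eq_sum_sdiff_singleton_add (Finset.mem_univ j)
          (fun x => c x * r x), hd]
      ring
    have hIH := IH c' hsum' j
    have := (FullReach_loop hI hRι hfull i j).trans hI hIH
    rwa [← add_assoc, add_assoc (r i), hsumr] at this

end Chain

section Tower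

variable {M : Type*} [MeasurableSpace M] {m : Measure M} {f : M → M} {Δ₀ : Set M}
  {R : M → ℕ} {p : M → ℕ} {J : M → ℝ} {CF β δ₀ : ℝ}

lemma towerMap_iter_level {x : M} {j : ℕ} (hj : j < R x) :
    (towerMap f R)^[j] (x, 0) = (x, j) := by
  induction j with
  | zero => rfl
  | succ j ih =>
    rw [Function.iterate_succ_apply', ih (Nat.lt_of_succ_lt hj)]
    simp only [towerMap, if_pos hj]

lemma towerMap_iter_ret (hI : IsInducedWGM m f Δ₀ R p J CF β δ₀) {x : M}
    (hx : x ∈ Δ₀) : (towerMap f R)^[R x] (x, 0) = (inducedF f R x, 0) := by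
  have hpos : 0 < R x := hI.R_pos x hx
  obtain ⟨d, hd⟩ : ∃ d, R x = d + 1 := ⟨R x - 1, by omega⟩
  rw [hd, Function.iterate_succ_apply', towerMap_iter_level (by omega)]
  simp only [towerMap]
  rw [if_neg (by omega)]

lemma towerMap_iter_base (hI : IsInducedWGM m f Δ₀ R p J CF β δ₀) {x : M}
    (hx : x ∈ Δ₀) (k : ℕ) :
    (towerMap f R)^[∑ i ∈ Finset.range k, R ((inducedF f R)^[i] x)] (x, 0) =
      ((inducedF f R)^[k] x, 0) := by
  induction k with
  | zero => simp
  | succ k ih =>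
    rw [Finset.sum_range_succ, add_comm, Function.iterate_add_apply, ih,
      towerMap_iter_ret hI (hI.toIsWGM.mapsTo.iterate k hx),
      ← Function.iterate_succ_apply' (inducedF f R) k x]

lemma towerMap_iter_snd_le (t : ℕ) (q : M × ℕ) :
    ((towerMap f R)^[t] q).2 ≤ q.2 + t := by
  induction t with
  | zero => simp
  | succ t ih =>
    rw [Function.iterate_succ_apply']
    have : ∀ r : M × ℕ, (towerMap f R r).2 ≤ r.2 + 1 := by
      intro r
      simp only [towerMap]
      split <;> simp
    exact le_trans (this _) (by omega)

lemma towerMeasure_prod_singleton (hΔ : MeasurableSet Δ₀) (hR : Measurable R)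
    {E : Set M} (hE : MeasurableSet E) (j : ℕ) :
    towerMeasure m Δ₀ R (E ×ˢ ({j} : Set ℕ)) = m (E ∩ (Δ₀ ∩ {x | j < R x})) := by
  have hEj : MeasurableSet (E ×ˢ ({j} : Set ℕ)) :=
    hE.prod (measurableSet_singleton j)
  rw [towerMeasure, Measure.sum_apply _ hEj]
  have hterm : ∀ ℓ : ℕ,
      (m.restrict (Δ₀ ∩ {x | ℓ < R x})).map (fun x => (x, ℓ)) (E ×ˢ ({j} : Set ℕ)) =
        if ℓ = j then m (E ∩ (Δ₀ ∩ {x | j < R x})) else 0 := by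
    intro ℓ
    rw [Measure.map_apply measurable_prodMk_right hEj]
    have hpre : (fun x => (x, ℓ)) ⁻¹' (E ×ˢ ({j} : Set ℕ)) =
        if ℓ = j then E else ∅ := by
      split
      · rename_i h; subst h; ext x; simp
      · rename_i h; ext x
        simp only [mem_preimage, mem_prod, mem_singleton_iff, mem_empty_iff_false,
          iff_false, not_and]
        exact fun _ h2 => h h2
    rw [hpre]
    split
    · rename_i h
      subst h
      rw [Measure.restrict_apply' (hΔ.inter (measurableSet_lt measurable_const hR))]
    · simp
  calc ∑' ℓ, (m.restrict (Δ₀ ∩ {x | ℓ < R x})).map (fun x => (x, ℓ))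
        (E ×ˢ ({j} : Set ℕ))
      = ∑' ℓ, if ℓ = j then m (E ∩ (Δ₀ ∩ {x | j < R x})) else 0 := by
        exact tsum_congr hterm
    _ = m (E ∩ (Δ₀ ∩ {x | j < R x})) := by
        rw [tsum_eq_single j (fun ℓ hℓ => if_neg hℓ)]
        exact if_pos rfl

lemma towerLevel_eq_prod (j : ℕ) :
    towerLevel Δ₀ R j = (Δ₀ ∩ {x | j < R x}) ×ˢ ({j} : Set ℕ) := by
  ext q
  simp only [towerLevel, mem_setOf_eq, mem_prod, mem_inter_iff, mem_singleton_iff]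
  tauto

end Tower

end AuxLemmas

/-- **Lemma (large images of partition elements under the tower map).** For the tower
map of an aperiodic induced weak Gibbs Markov map with a coprime block, for every
`ω ∈ 𝒫₀ⁿ`, `ε₀ > 0` and `ℓ₀ ≥ 0` there is `t₀` such that for all `t ≥ t₀`,
`m(Tᵗ ω) ≥ m(⋃_{j ≤ ℓ₀} Δ_j) − ε₀`. -/
theorem image_measure_lower_bound
    {M : Type*} [MeasurableSpace M]
    (m : Measure M) (f : M → M) (Δ₀ : Set M) (R : M → ℕ) (p : M → ℕ) (J : M → ℝ)
    (CF β δ₀ : ℝ) (hWGM : IsInducedWGM m f Δ₀ R p J CF β δ₀)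
    (hap : AperiodicWGM m Δ₀ (inducedF f R) p)
    (hcb : HasCoprimeBlock m (inducedF f R) Δ₀ R p) :
    ∀ n : ℕ, 1 ≤ n → ∀ w : List ℕ, w.length = n →
      0 < m (pElemN Δ₀ (inducedF f R) p w) →
      ∀ ε₀ : ℝ, 0 < ε₀ → ∀ ℓ₀ : ℕ,
        ∃ t₀ : ℕ, ∀ t ≥ t₀,
          (towerMeasure m Δ₀ R (⋃ j ≤ ℓ₀, towerLevel Δ₀ R j)).toReal - ε₀ ≤
            (towerMeasure m Δ₀ R
              ((towerMap f R)^[t] ''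
                ((fun x => (x, (0 : ℕ))) '' pElemN Δ₀ (inducedF f R) p w))).toReal := by
  intro n hn w hw hpos ε₀ hε₀ ℓ₀
  classical
  have hW := hWGM.toIsWGM
  set ω := pElemN Δ₀ (inducedF f R) p w with hωdef
  -- block data
  obtain ⟨N, hN2, ι, r, hιpos, hRι, hgcd, hfull⟩ := hcb
  have hN : 0 < N := by omega
  set i₀ : Fin N := ⟨0, hN⟩ with hi₀
  have hr_pos : ∀ i, 0 < r i := by
    intro i
    obtain ⟨x, hx⟩ := nonempty_of_measure_ne_zero (hιpos i).ne'
    rw [← hRι i x hx]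
    exact hWGM.R_pos x (pElem_subset _ hx)
  obtain ⟨B, hB⟩ := semigroup_rep hN r hr_pos hgcd
  have hloop : ∀ s, r i₀ + B ≤ s →
      FullReach m f Δ₀ R p (pElem Δ₀ p (ι i₀)) s (ι i₀) := by
    intro s hs
    obtain ⟨c, hc⟩ := hB (s - r i₀) (by omega)
    have h := FullReach_chain hWGM hN hRι hfull (∑ i, c i) c rfl i₀
    rw [hc] at h
    have heq : r i₀ + (s - r i₀) = s := by omega
    rwa [heq] at h
  -- from ω into the block
  have hw_ne : w ≠ [] := by
    intro h
    rw [h] at hw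
    simp only [List.length_nil] at hw
    omega
  have ha_ex : ∃ a, 0 < m (ω ∩ (inducedF f R)^[w.length] ⁻¹' pElem Δ₀ p a) := by
    by_contra hc
    push_neg at hc
    have hcover : ω ⊆ ⋃ a, (ω ∩ (inducedF f R)^[w.length] ⁻¹' pElem Δ₀ p a) := by
      intro x hx
      have hxn : (inducedF f R)^[w.length] x ∈ Δ₀ :=
        hW.mapsTo.iterate _ (pElemN_subset w hx)
      exact mem_iUnion.2 ⟨p ((inducedF f R)^[w.length] x), hx, mem_pElem.2 ⟨hxn, rfl⟩⟩
    have : m ω = 0 := measure_mono_null hcover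
      (measure_iUnion_null fun a => le_antisymm (hc a) zero_le)
    exact absurd this hpos.ne'
  obtain ⟨a, hapos⟩ := ha_ex
  have hma : 0 < m (pElem Δ₀ p a) := by
    by_contra hc
    push_neg at hc
    have hc0 : m (pElem Δ₀ p a) = 0 := le_antisymm hc zero_le
    have h1 := hW.null_preimage_iter (B := pElem Δ₀ p a)
      (measure_mono_null inter_subset_left hc0) w.length
    refine absurd (measure_mono_null ?_ h1) hapos.ne'
    intro x hx
    exact ⟨hx.2, pElemN_subset w hx.1⟩
  obtain ⟨t₁, ht₁⟩ := FullReach_of_cyl hWGM hw_ne hapos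
  obtain ⟨t₂, ht₂⟩ := FullReach_of_aperiodic hWGM hap hma (hιpos i₀)
  have hreach : ∀ q, 0 < m (pElem Δ₀ p q) → ∃ tq, ∀ t, tq ≤ t →
      FullReach m f Δ₀ R p ω t q := by
    intro q hq
    obtain ⟨t₃, ht₃⟩ := FullReach_of_aperiodic hWGM hap (hιpos i₀) hq
    refine ⟨t₁ + t₂ + (r i₀ + B) + t₃, fun t ht => ?_⟩
    have h := ((ht₁.trans hWGM ht₂).trans hWGM
      (hloop (t - (t₁ + t₂ + t₃)) (by omega))).trans hWGM ht₃
    have heq : t₁ + t₂ + (t - (t₁ + t₂ + t₃)) + t₃ = t := by omega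
    rwa [heq] at h
  -- finite family of partition elements
  set ε' : ENNReal := ENNReal.ofReal (ε₀ / (ℓ₀ + 1)) with hε'def
  have hε'pos : 0 < ε' := ENNReal.ofReal_pos.2 (by positivity)
  have htsum_ne : (∑' i, m (pElem Δ₀ p i)) ≠ ⊤ := by
    have hle : m (⋃ i, pElem Δ₀ p i) = ∑' i, m (pElem Δ₀ p i) := by
      refine measure_iUnion ?_ (fun i => measurableSet_pElem hW.meas_Δ₀ hW.meas_p i)
      intro i j hij
      refine Set.disjoint_left.2 fun x hxi hxj => ?_
      have hdis := pElem_disjoint (p := p) (Δ₀ := Δ₀) hij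
      have : x ∈ pElem Δ₀ p i ∩ pElem Δ₀ p j := ⟨hxi, hxj⟩
      rw [hdis] at this
      exact this
    rw [← hle, iUnion_pElem]
    exact hW.fin.ne
  obtain ⟨K, hK⟩ : ∃ K, (∑' i, m (pElem Δ₀ p (i + K))) < ε' := by
    have h := ENNReal.tendsto_sum_nat_add (fun i => m (pElem Δ₀ p i)) htsum_ne
    exact (h.eventually (gt_mem_nhds hε'pos)).exists
  set Dj : ℕ → Set M := fun j => Δ₀ ∩ {x | j < R x} with hDjdef
  set AK := ⋃ q ∈ Finset.range K, pElem Δ₀ p q with hAKdef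
  have htail : m (Δ₀ \ AK) ≤ ε' := by
    refine le_trans (le_trans (measure_mono ?_) (measure_iUnion_le _)) hK.le
    rintro x ⟨hx, hnx⟩
    have hxp : x ∈ pElem Δ₀ p (p x) := mem_pElem.2 ⟨hx, rfl⟩
    have hge : K ≤ p x := by
      by_contra hlt
      push_neg at hlt
      exact hnx (mem_biUnion (Finset.mem_range.2 hlt) hxp)
    refine mem_iUnion.2 ⟨p x - K, ?_⟩
    rwa [Nat.sub_add_cancel hge]
  set Q := (Finset.range K).filter (fun q => 0 < m (pElem Δ₀ p q)) with hQdef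
  have hchoice : ∀ q ∈ Q, ∃ tq, ∀ t, tq ≤ t → FullReach m f Δ₀ R p ω t q :=
    fun q hq => hreach q (Finset.mem_filter.1 hq).2
  choose! g hg using hchoice
  refine ⟨Q.sup g + ℓ₀, fun t ht => ?_⟩
  set P2 := (Finset.range (ℓ₀ + 1)) ×ˢ Q with hP2def
  -- per-(level, element) coverage by the image
  have key : ∀ jq : ℕ × ℕ, jq ∈ P2 → ∃ G : Set M,
      G ⊆ pElem Δ₀ p jq.2 ∩ Dj jq.1 ∧ MeasurableSet G ∧
      m (pElem Δ₀ p jq.2 ∩ Dj jq.1) ≤ m G ∧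
      ∀ y ∈ G, (y, jq.1) ∈
        (towerMap f R)^[t] '' ((fun x => (x, (0 : ℕ))) '' ω) := by
    rintro ⟨j, q⟩ hjq
    obtain ⟨hj, hq⟩ := Finset.mem_product.1 hjq
    rw [Finset.mem_range] at hj
    have hgt : g q ≤ t - j := by
      have h1 : g q ≤ Q.sup g := Finset.le_sup hq
      omega
    obtain ⟨k, Z, hZω, hZt, hZcov⟩ := hg q hq (t - j) hgt
    have hNmnull : m (toMeasurable m (pElem Δ₀ p q \ (inducedF f R)^[k] '' Z)) = 0 := by
      rw [measure_toMeasurable]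
      exact hZcov
    refine ⟨(pElem Δ₀ p q ∩ Dj j) \
      toMeasurable m (pElem Δ₀ p q \ (inducedF f R)^[k] '' Z), diff_subset, ?_, ?_, ?_⟩
    · exact (((measurableSet_pElem hW.meas_Δ₀ hW.meas_p q).inter
        (hW.meas_Δ₀.inter (measurableSet_lt measurable_const hWGM.meas_R))).diff
        (measurableSet_toMeasurable m _))
    · rw [measure_diff_null hNmnull]
    · rintro y ⟨⟨hyq, hyD⟩, hyN⟩
      have hyF : y ∈ (inducedF f R)^[k] '' Z := by
        by_contra hnot
        exact hyN (subset_toMeasurable m _ ⟨hyq, hnot⟩)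
      obtain ⟨x, hxZ, hxy⟩ := hyF
      refine ⟨(x, 0), ⟨x, hZω hxZ, rfl⟩, ?_⟩
      have hxΔ : x ∈ Δ₀ := pElemN_subset w (hZω hxZ)
      have ht_split : t = j + (t - j) := by omega
      rw [ht_split, Function.iterate_add_apply]
      have hbase : (towerMap f R)^[t - j] (x, 0) = ((inducedF f R)^[k] x, 0) := by
        rw [← hZt x hxZ]
        exact towerMap_iter_base hWGM hxΔ k
      rw [hbase, hxy]
      exact towerMap_iter_level hyD.2
  choose! G hG1 hG2 hG3 hG4 using key
  -- the union of the covered pieces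
  have hUsub : (⋃ jq ∈ P2, (G jq ×ˢ ({jq.1} : Set ℕ))) ⊆
      (towerMap f R)^[t] '' ((fun x => (x, (0 : ℕ))) '' ω) := by
    intro y hy
    obtain ⟨jq, hjq, hyG⟩ := mem_iUnion₂.1 hy
    obtain ⟨hy1, hy2⟩ := hyG
    rw [mem_singleton_iff] at hy2
    have hmem := hG4 jq hjq y.1 hy1
    have heq : (y.1, jq.1) = y := by
      rw [← hy2]
    rwa [heq] at hmem
  have hdisj : (↑P2 : Set (ℕ × ℕ)).PairwiseDisjoint
      (fun jq : ℕ × ℕ => G jq ×ˢ ({jq.1} : Set ℕ)) := by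
    intro u hu v hv huv
    refine Set.disjoint_left.2 ?_
    rintro ⟨y, ℓ⟩ ⟨hyu, hℓu⟩ ⟨hyv, hℓv⟩
    rw [mem_singleton_iff] at hℓu hℓv
    have h1 : u.1 = v.1 := by rw [← hℓu, ← hℓv]
    have h2 : u.2 ≠ v.2 := fun h => huv (Prod.ext h1 h)
    have hyqu : y ∈ pElem Δ₀ p u.2 := ((hG1 u hu) hyu).1
    have hyqv : y ∈ pElem Δ₀ p v.2 := ((hG1 v hv) hyv).1
    exact h2 ((mem_pElem.1 hyqu).2.symm.trans (mem_pElem.1 hyqv).2)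
  have hμU : (∑ jq ∈ P2, m (pElem Δ₀ p jq.2 ∩ Dj jq.1)) ≤
      towerMeasure m Δ₀ R (⋃ jq ∈ P2, (G jq ×ˢ ({jq.1} : Set ℕ))) := by
    rw [measure_biUnion_finset hdisj
      (fun jq hjq => (hG2 jq hjq).prod (measurableSet_singleton _))]
    refine Finset.sum_le_sum fun jq hjq => ?_
    rw [towerMeasure_prod_singleton hW.meas_Δ₀ hWGM.meas_R (hG2 jq hjq) jq.1]
    have hGD : G jq ∩ (Δ₀ ∩ {x | jq.1 < R x}) = G jq :=
      inter_eq_self_of_subset_left ((hG1 jq hjq).trans inter_subset_right)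
    rw [hGD]
    exact hG3 jq hjq
  -- cover each level by the finite family up to ε'
  have hcover_j : ∀ j, m (Dj j) ≤ (∑ q ∈ Q, m (pElem Δ₀ p q ∩ Dj j)) + ε' := by
    intro j
    have hnullQ : m (⋃ q ∈ (Finset.range K) \ Q, pElem Δ₀ p q) = 0 := by
      refine le_antisymm (le_trans (measure_biUnion_finset_le _ _) ?_) zero_le
      refine le_of_eq (Finset.sum_eq_zero fun q hq => ?_)
      have := (Finset.mem_sdiff.1 hq).2
      rw [hQdef] at this
      by_contra hne
      exact this (Finset.mem_filter.2 ⟨(Finset.mem_sdiff.1 hq).1,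
        lt_of_le_of_ne zero_le (Ne.symm hne)⟩)
    have hsub : Dj j ⊆ (⋃ q ∈ Q, (pElem Δ₀ p q ∩ Dj j)) ∪
        ((Δ₀ \ AK) ∪ (⋃ q ∈ (Finset.range K) \ Q, pElem Δ₀ p q)) := by
      intro x hx
      have hxΔ : x ∈ Δ₀ := hx.1
      by_cases hK' : p x < K
      · by_cases hpos' : 0 < m (pElem Δ₀ p (p x))
        · exact Or.inl (mem_biUnion
            (Finset.mem_filter.2 ⟨Finset.mem_range.2 hK', hpos'⟩)
            ⟨mem_pElem.2 ⟨hxΔ, rfl⟩, hx⟩)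
        · refine Or.inr (Or.inr (mem_biUnion ?_ (mem_pElem.2 ⟨hxΔ, rfl⟩)))
          refine Finset.mem_sdiff.2 ⟨Finset.mem_range.2 hK', fun hmem => ?_⟩
          exact hpos' (Finset.mem_filter.1 hmem).2
      · refine Or.inr (Or.inl ⟨hxΔ, fun hmem => ?_⟩)
        obtain ⟨q, hq, hxq⟩ := mem_iUnion₂.1 hmem
        rw [Finset.mem_range] at hq
        exact hK' ((mem_pElem.1 hxq).2 ▸ hq)
    calc m (Dj j) ≤ m ((⋃ q ∈ Q, (pElem Δ₀ p q ∩ Dj j)) ∪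
          ((Δ₀ \ AK) ∪ (⋃ q ∈ (Finset.range K) \ Q, pElem Δ₀ p q))) :=
          measure_mono hsub
      _ ≤ m (⋃ q ∈ Q, (pElem Δ₀ p q ∩ Dj j)) +
          (m (Δ₀ \ AK) + m (⋃ q ∈ (Finset.range K) \ Q, pElem Δ₀ p q)) :=
          le_trans (measure_union_le _ _) (add_le_add_right (measure_union_le _ _) _)
      _ ≤ (∑ q ∈ Q, m (pElem Δ₀ p q ∩ Dj j)) + ε' := by
          rw [hnullQ, add_zero]
          exact add_le_add (measure_biUnion_finset_le _ _) htail
  -- the measure of the union of levels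
  have hL : towerMeasure m Δ₀ R (⋃ j ≤ ℓ₀, towerLevel Δ₀ R j) ≤
      ∑ j ∈ Finset.range (ℓ₀ + 1), m (Dj j) := by
    refine le_trans (measure_mono ?_) (le_trans (measure_biUnion_finset_le
      (Finset.range (ℓ₀ + 1)) (fun j => Dj j ×ˢ ({j} : Set ℕ))) ?_)
    · intro y hy
      obtain ⟨j, hj, hyj⟩ := mem_iUnion₂.1 hy
      rw [towerLevel_eq_prod] at hyj
      exact mem_biUnion (Finset.mem_range.2 (Nat.lt_succ_of_le hj)) hyj
    · refine Finset.sum_le_sum fun j hj => ?_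
      rw [towerMeasure_prod_singleton hW.meas_Δ₀ hWGM.meas_R
        (hW.meas_Δ₀.inter (measurableSet_lt measurable_const hWGM.meas_R)) j]
      exact measure_mono inter_subset_left
  -- finiteness of the image measure
  have hμim_ne : towerMeasure m Δ₀ R
      ((towerMap f R)^[t] '' ((fun x => (x, (0 : ℕ))) '' ω)) ≠ ⊤ := by
    have hsub : (towerMap f R)^[t] '' ((fun x => (x, (0 : ℕ))) '' ω) ⊆
        ⋃ j ∈ Finset.range (t + 1), ((univ : Set M) ×ˢ ({j} : Set ℕ)) := by
      rintro y ⟨z, ⟨x, hx, rfl⟩, rfl⟩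
      have hle := towerMap_iter_snd_le (f := f) (R := R) t ((fun x => (x, (0 : ℕ))) x)
      have hle' : ((towerMap f R)^[t] ((fun x => (x, (0 : ℕ))) x)).2 ≤ t := by
        simpa using hle
      refine mem_biUnion (Finset.mem_range.2 ?_) ⟨mem_univ _, rfl⟩
      omega
    refine ne_of_lt (lt_of_le_of_lt (measure_mono hsub)
      (lt_of_le_of_lt (measure_biUnion_finset_le _ _) ?_))
    refine ENNReal.sum_lt_top.2 fun j _ => ?_
    rw [towerMeasure_prod_singleton hW.meas_Δ₀ hWGM.meas_R MeasurableSet.univ j]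
    exact lt_of_le_of_lt (measure_mono fun x hx => hx.2.1) hW.fin
  -- put everything together
  have hS'le : (∑ jq ∈ P2, m (pElem Δ₀ p jq.2 ∩ Dj jq.1)) ≤
      towerMeasure m Δ₀ R ((towerMap f R)^[t] '' ((fun x => (x, (0 : ℕ))) '' ω)) :=
    le_trans hμU (measure_mono hUsub)
  have hsum1 : ∑ j ∈ Finset.range (ℓ₀ + 1), m (Dj j) ≤
      (∑ jq ∈ P2, m (pElem Δ₀ p jq.2 ∩ Dj jq.1)) + ((ℓ₀ + 1 : ℕ) : ENNReal) * ε' := by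
    calc ∑ j ∈ Finset.range (ℓ₀ + 1), m (Dj j)
        ≤ ∑ j ∈ Finset.range (ℓ₀ + 1),
            ((∑ q ∈ Q, m (pElem Δ₀ p q ∩ Dj j)) + ε') :=
          Finset.sum_le_sum fun j _ => hcover_j j
      _ = (∑ j ∈ Finset.range (ℓ₀ + 1), ∑ q ∈ Q, m (pElem Δ₀ p q ∩ Dj j)) +
            ((ℓ₀ + 1 : ℕ) : ENNReal) * ε' := by
          rw [Finset.sum_add_distrib, Finset.sum_const, Finset.card_range,
            nsmul_eq_mul]
      _ = (∑ jq ∈ P2, m (pElem Δ₀ p jq.2 ∩ Dj jq.1)) +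
            ((ℓ₀ + 1 : ℕ) : ENNReal) * ε' := by
          rw [hP2def, Finset.sum_product]
  have hc_ne : ((ℓ₀ + 1 : ℕ) : ENNReal) * ε' ≠ ⊤ :=
    ENNReal.mul_ne_top (ENNReal.natCast_ne_top _) ENNReal.ofReal_ne_top
  have hfinal : towerMeasure m Δ₀ R (⋃ j ≤ ℓ₀, towerLevel Δ₀ R j) ≤
      towerMeasure m Δ₀ R ((towerMap f R)^[t] '' ((fun x => (x, (0 : ℕ))) '' ω)) +
        ((ℓ₀ + 1 : ℕ) : ENNReal) * ε' :=
    le_trans hL (le_trans hsum1 (add_le_add_left hS'le _))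
  have h2 : (towerMeasure m Δ₀ R (⋃ j ≤ ℓ₀, towerLevel Δ₀ R j)).toReal ≤
      (towerMeasure m Δ₀ R
        ((towerMap f R)^[t] '' ((fun x => (x, (0 : ℕ))) '' ω))).toReal +
        (((ℓ₀ + 1 : ℕ) : ENNReal) * ε').toReal := by
    rw [← ENNReal.toReal_add hμim_ne hc_ne]
    exact ENNReal.toReal_mono (ENNReal.add_ne_top.2 ⟨hμim_ne, hc_ne⟩) hfinal
  have h3 : (((ℓ₀ + 1 : ℕ) : ENNReal) * ε').toReal = ε₀ := by
    rw [ENNReal.toReal_mul, hε'def, ENNReal.toReal_ofReal (by positivity)]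
    have hnat : (((ℓ₀ + 1 : ℕ) : ENNReal)).toReal = ((ℓ₀ + 1 : ℕ) : ℝ) := rfl
    rw [hnat]
    push_cast
    have hne : ((ℓ₀ : ℝ) + 1) ≠ 0 := by positivity
    field_simp
  linarith [h2, h3]

end WGMPaper
end
end
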